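/- arXiv:math-ph/0404006 — 5 statements merged into one kernel-verified Lean document; each statement's English description precedes it below -/
import Mathlib

section
/- Let V be a unitary operator on a separable Hilbert space H with spectral measure E, and let A : H → K be bounded (K a Hilbert space). Suppose that for all φ ∈ H, Σ_{n∈ℤ} ‖A V^n φ‖² ≤ C ‖φ‖² for some constant C. Then the closure of the range of A* is contained in the absolutely continuous subspace H_ac(V). -/
open Real Complex MeasureTheory ContinuousLinearMap Set AddCircle
open scoped ENNReal NNReal
noncomputable section
namespace Stmt7Aux



variable {X : Type*} [TopologicalSpace X] [CompactSpace X] [MeasurableSpace X] [BorelSpace X]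

lemma integrable_cm (P : Measure X) [IsFiniteMeasure P] (g : C(X, ℂ)) :
    Integrable g P :=
  g.continuous.integrable_of_hasCompactSupport
    (IsCompact.of_isClosed_subset isCompact_univ (isClosed_tsupport _) (Set.subset_univ _))

/-- Integration against a finite measure, as a CLM on C(X, ℂ). -/
def intCLM (P : Measure X) [IsFiniteMeasure P] : C(X, ℂ) →L[ℂ] ℂ :=
  LinearMap.mkContinuous
    { toFun := fun g => ∫ x, g x ∂P
      map_add' := fun g h => by
        simpa using integral_add (integrable_cm P g) (integrable_cm P h)
      map_smul' := fun c g => by simpa using integral_smul c (g : X → ℂ) }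
    (P Set.univ).toReal
    (fun g => by
      simpa [mul_comm, Measure.real] using
        norm_integral_le_of_norm_le_const (C := ‖g‖) (μ := P)
          (Filter.Eventually.of_forall fun x => g.norm_coe_le_norm x))

lemma intCLM_apply (P : Measure X) [IsFiniteMeasure P] (g : C(X, ℂ)) :
    intCLM P g = ∫ x, g x ∂P := rfl

/-- Integration against an integrable density, as a CLM on C(X, ℂ). -/
def intMulCLM (Q : Measure X) (f : X → ℂ) (hf : Integrable f Q) : C(X, ℂ) →L[ℂ] ℂ :=
  LinearMap.mkContinuous
    { toFun := fun g => ∫ x, g x * f x ∂Q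
      map_add' := fun g h => by
        have h1 : Integrable (fun x => g x * f x) Q :=
          hf.bdd_mul g.continuous.aestronglyMeasurable (Filter.Eventually.of_forall fun x => g.norm_coe_le_norm x)
        have h2 : Integrable (fun x => h x * f x) Q :=
          hf.bdd_mul h.continuous.aestronglyMeasurable (Filter.Eventually.of_forall fun x => h.norm_coe_le_norm x)
        simpa [add_mul] using integral_add h1 h2
      map_smul' := fun c g => by
        simpa [mul_assoc] using integral_smul c (fun x => g x * f x) }
    (∫ x, ‖f x‖ ∂Q)
    (fun g => by
      simp only [LinearMap.coe_mk, AddHom.coe_mk]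
      calc ‖∫ x, g x * f x ∂Q‖ ≤ ∫ x, ‖g x * f x‖ ∂Q := norm_integral_le_integral_norm _
        _ ≤ ∫ x, ‖g‖ * ‖f x‖ ∂Q := by
            refine integral_mono_of_nonneg (Filter.Eventually.of_forall fun x => norm_nonneg _)
              (hf.norm.const_mul _) (Filter.Eventually.of_forall fun x => ?_)
            simp only []; rw [norm_mul]
            exact mul_le_mul_of_nonneg_right (g.norm_coe_le_norm x) (norm_nonneg _)
        _ = ‖g‖ * ∫ x, ‖f x‖ ∂Q := integral_const_mul _ _
        _ = (∫ x, ‖f x‖ ∂Q) * ‖g‖ := mul_comm _ _)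

lemma intMulCLM_apply (Q : Measure X) (f : X → ℂ) (hf : Integrable f Q) (g : C(X, ℂ)) :
    intMulCLM Q f hf g = ∫ x, g x * f x ∂Q := rfl


variable {T : ℝ} [hT : Fact (0 < T)]

lemma clm_ext_fourier {L M : C(AddCircle T, ℂ) →L[ℂ] ℂ}
    (h : ∀ n : ℤ, L (fourier n) = M (fourier n)) : L = M := by
  refine ContinuousLinearMap.ext_on
    (Submodule.dense_iff_topologicalClosure_eq_top.mpr span_fourier_closure_eq_top) ?_
  rintro - ⟨n, rfl⟩
  exact h n

lemma integral_eq_of_fourier (P Q : Measure (AddCircle T)) [IsFiniteMeasure P] [IsFiniteMeasure Q]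
    (f : AddCircle T → ℂ) (hf : Integrable f Q)
    (h : ∀ n : ℤ, ∫ x, fourier n x ∂P = ∫ x, fourier n x * f x ∂Q) :
    ∀ g : C(AddCircle T, ℂ), ∫ x, g x ∂P = ∫ x, g x * f x ∂Q := by
  intro g
  have := clm_ext_fourier (L := intCLM P) (M := intMulCLM Q f hf) (fun n => h n)
  exact DFunLike.congr_fun this g

lemma measure_ext_fourier (P Q : Measure (AddCircle T)) [IsFiniteMeasure P] [IsFiniteMeasure Q]
    (h : ∀ n : ℤ, ∫ x, fourier n x ∂P = ∫ x, fourier n x ∂Q) : P = Q := by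
  have key : ∀ g : C(AddCircle T, ℂ), ∫ x, g x ∂P = ∫ x, g x ∂Q := by
    intro g
    have := clm_ext_fourier (L := intCLM P) (M := intCLM Q) (fun n => h n)
    exact DFunLike.congr_fun this g
  refine ext_of_forall_lintegral_eq_of_IsFiniteMeasure (fun g => ?_)
  have hreal : ∫ x, (g x : ℝ) ∂P = ∫ x, (g x : ℝ) ∂Q := by
    have h1 := key ⟨fun x => ((g x : ℝ) : ℂ), Complex.continuous_ofReal.comp
      (g.continuous.subtype_val)⟩
    simp only [ContinuousMap.coe_mk] at h1
    have h2 : ((∫ x, (g x : ℝ) ∂P : ℝ) : ℂ) = ((∫ x, (g x : ℝ) ∂Q : ℝ) : ℂ) :=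
      (integral_ofReal.symm.trans h1).trans integral_ofReal
    exact_mod_cast h2
  have hiP : Integrable (fun x => (g x : ℝ)) P :=
    g.continuous.subtype_val.integrable_of_hasCompactSupport
      (IsCompact.of_isClosed_subset isCompact_univ (isClosed_tsupport _) (Set.subset_univ _))
  have hiQ : Integrable (fun x => (g x : ℝ)) Q :=
    g.continuous.subtype_val.integrable_of_hasCompactSupport
      (IsCompact.of_isClosed_subset isCompact_univ (isClosed_tsupport _) (Set.subset_univ _))
  rw [lintegral_coe_eq_integral _ hiP, lintegral_coe_eq_integral _ hiQ, hreal]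



variable {X : Type*} [MetricSpace X] [CompactSpace X] [MeasurableSpace X] [BorelSpace X]

lemma measure_le_of_integral (P Q : Measure X) [IsFiniteMeasure P] [IsFiniteMeasure Q]
    (f : X → ℂ) (hf : Integrable f Q)
    (h : ∀ g : C(X, ℂ), ∫ x, g x ∂P = ∫ x, g x * f x ∂Q)
    {U : Set X} (hU : IsOpen U) :
    P U ≤ Q.withDensity (fun x => ‖f x‖₊) U := by
  set ν := Q.withDensity (fun x => (‖f x‖₊ : ENNReal)) with hν
  -- reduce to closed F ⊆ U
  by_contra hcon
  push_neg at hcon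
  obtain ⟨F, hFU, hFclosed, hF⟩ :=
    (MeasureTheory.Measure.WeaklyRegular.innerRegular (μ := P)) hU _ hcon
  have key : P F ≤ ν U := by
    -- Urysohn
    obtain ⟨g, hg0, hg1, hg01⟩ := exists_continuous_zero_one_of_isClosed
      hU.isClosed_compl hFclosed (by simpa [Set.disjoint_compl_left_iff_subset] using hFU)
    have hgC : Continuous fun x => ((g x : ℝ) : ℂ) :=
      Complex.continuous_ofReal.comp g.continuous
    have h1 : (P F).toReal ≤ ∫ x, g x ∂P := by
      rw [← measureReal_def, ← MeasureTheory.integral_indicator_one hFclosed.measurableSet]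
      refine integral_mono ((integrable_const (1:ℝ)).indicator hFclosed.measurableSet)
        (g.continuous.integrable_of_hasCompactSupport
          (IsCompact.of_isClosed_subset isCompact_univ (isClosed_tsupport _) (Set.subset_univ _)))
        (fun x => ?_)
      by_cases hx : x ∈ F
      · simp [Set.indicator_of_mem hx, hg1 hx]
      · simp only [Set.indicator_of_notMem hx]
        exact (hg01 x).1
    have h2 : ∫ x, g x ∂P = (∫ x, ((g x : ℝ) : ℂ) ∂P).re := by
      have he : (∫ x, ((g x : ℝ) : ℂ) ∂P) = ((∫ x, g x ∂P : ℝ) : ℂ) := integral_ofReal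
      rw [he, Complex.ofReal_re]
    have h3 := h ⟨fun x => ((g x : ℝ) : ℂ), hgC⟩
    simp only [ContinuousMap.coe_mk] at h3
    have h4 : (∫ x, ((g x : ℝ) : ℂ) * f x ∂Q).re ≤ ‖∫ x, ((g x : ℝ) : ℂ) * f x ∂Q‖ :=
      Complex.re_le_norm _
    have h5 : ‖∫ x, ((g x : ℝ) : ℂ) * f x ∂Q‖ ≤ ∫ x, Set.indicator U (fun y => ‖f y‖) x ∂Q := by
      refine (norm_integral_le_integral_norm _).trans ?_
      refine integral_mono_of_nonneg (Filter.Eventually.of_forall fun x => norm_nonneg _)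
        (hf.norm.indicator hU.measurableSet) (Filter.Eventually.of_forall fun x => ?_)
      by_cases hx : x ∈ U
      · simp only [Set.indicator_of_mem hx, norm_mul, Complex.norm_real]
        refine mul_le_of_le_one_left (norm_nonneg _) ?_
        rw [Real.norm_eq_abs, _root_.abs_of_nonneg (hg01 x).1]
        exact (hg01 x).2
      · have : g x = 0 := hg0 hx
        simp [Set.indicator_of_notMem hx, this]
    have h6 : ∫ x, Set.indicator U (fun y => ‖f y‖) x ∂Q = (ν U).toReal := by
      rw [integral_indicator hU.measurableSet, hν,
        withDensity_apply _ hU.measurableSet]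
      rw [integral_norm_eq_lintegral_enorm (hf.aestronglyMeasurable.restrict)]
      rfl
    have chain : (P F).toReal ≤ (ν U).toReal := by
      calc (P F).toReal ≤ ∫ x, g x ∂P := h1
        _ = (∫ x, ((g x : ℝ) : ℂ) ∂P).re := h2
        _ = (∫ x, ((g x : ℝ) : ℂ) * f x ∂Q).re := by rw [h3]
        _ ≤ _ := h4.trans (h5.trans_eq h6)
    have hνUfin : ν U ≠ ⊤ := by
      have : IsFiniteMeasure ν := by
        constructor
        rw [hν, withDensity_apply _ MeasurableSet.univ, setLIntegral_univ]
        exact hf.2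
      exact measure_ne_top ν U
    exact (ENNReal.toReal_le_toReal (measure_ne_top P F) hνUfin).mp chain
  exact absurd (hF.trans_le key) (by simp)

lemma absCont_of_integral_eq (P Q : Measure X) [IsFiniteMeasure P] [IsFiniteMeasure Q]
    (f : X → ℂ) (hf : Integrable f Q)
    (h : ∀ g : C(X, ℂ), ∫ x, g x ∂P = ∫ x, g x * f x ∂Q) :
    P ≪ Q := by
  intro s hs
  set ν := Q.withDensity (fun x => (‖f x‖₊ : ENNReal)) with hν
  haveI : IsFiniteMeasure ν := by
    constructor
    rw [hν, withDensity_apply _ MeasurableSet.univ, setLIntegral_univ]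
    exact hf.2
  have hνs : ν (toMeasurable Q s) = 0 := by
    refine (withDensity_absolutelyContinuous Q _) ?_
    simpa using hs
  -- outer regularity of ν
  refine le_antisymm ?_ zero_le
  refine le_of_forall_gt fun ε hε => ?_
  obtain ⟨U, hsU, hUopen, hU⟩ := (toMeasurable Q s).exists_isOpen_lt_of_lt ε (by
    rw [hνs]; exact hε)
  calc P s ≤ P U := measure_mono ((subset_toMeasurable Q s).trans hsU)
    _ ≤ ν U := measure_le_of_integral P Q f hf h hUopen
    _ < ε := hU



variable {T : ℝ} [hT : Fact (0 < T)]

/-- The canonical "representative" map `AddCircle T → ℝ` landing in `[0, T)`. -/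
def rep (T : ℝ) [hT : Fact (0 < T)] : AddCircle T → ℝ :=
  fun z => ((AddCircle.measurableEquivIco T 0 z : Ico (0:ℝ) (0 + T)) : ℝ)

lemma measurable_rep : Measurable (rep T) :=
  measurable_subtype_coe.comp (AddCircle.measurableEquivIco T 0).measurable

lemma rep_mk {x : ℝ} (hx : x ∈ Ico (0:ℝ) (0 + T)) : rep T ((x : ℝ) : AddCircle T) = x := by
  have : (AddCircle.equivIco T 0) ((x : ℝ) : AddCircle T) = ⟨x, hx⟩ := by
    rw [Equiv.apply_eq_iff_eq_symm_apply]
    rfl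
  simp only [rep, AddCircle.measurableEquivIco]
  erw [this]

lemma map_rep_map_mk (P : Measure ℝ) (hsupp : P (Ico (0:ℝ) (0 + T))ᶜ = 0) :
    Measure.map (rep T) (Measure.map ((↑) : ℝ → AddCircle T) P) = P := by
  rw [Measure.map_map measurable_rep AddCircle.measurable_mk']
  have hae : (rep T ∘ ((↑) : ℝ → AddCircle T)) =ᵐ[P] id := by
    have h1 : ∀ᵐ x ∂P, x ∈ Ico (0:ℝ) (0 + T) := mem_ae_iff.mpr hsupp
    filter_upwards [h1] with x hx
    exact rep_mk hx
  rw [Measure.map_congr hae, Measure.map_id]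

lemma absCont_of_circle (P : Measure ℝ) (hsupp : P (Ico (0:ℝ) (0 + T))ᶜ = 0)
    (hac : Measure.map ((↑) : ℝ → AddCircle T) P ≪ (volume : Measure (AddCircle T))) :
    P ≪ (volume : Measure ℝ) := by
  intro s hs
  set t := toMeasurable volume s with ht
  have hts : s ⊆ t := subset_toMeasurable volume s
  have htm : MeasurableSet t := measurableSet_toMeasurable volume s
  have htv : volume t = 0 := by rw [ht, measure_toMeasurable]; exact hs
  refine le_antisymm ?_ zero_le
  calc P s ≤ P t := measure_mono hts
    _ = Measure.map (rep T) (Measure.map ((↑) : ℝ → AddCircle T) P) t := by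
        rw [map_rep_map_mk P hsupp]
    _ = Measure.map ((↑) : ℝ → AddCircle T) P ((rep T) ⁻¹' t) :=
        Measure.map_apply measurable_rep htm
    _ = 0 := by
        refine hac ?_
        -- volume of preimage in the circle
        have hWm : MeasurableSet ((rep T) ⁻¹' t) := measurable_rep htm
        rw [← (AddCircle.measurePreserving_mk T 0).map_eq,
          Measure.map_apply AddCircle.measurable_mk' hWm, Measure.restrict_apply
          (AddCircle.measurable_mk' hWm)]
        have hsub : ((↑) : ℝ → AddCircle T) ⁻¹' ((rep T) ⁻¹' t) ∩ Ioc 0 (0 + T)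
            ⊆ (t ∩ Ico (0:ℝ) (0 + T)) ∪ {0 + T} := by
          rintro x ⟨hx1, hx2⟩
          by_cases hxI : x ∈ Ico (0:ℝ) (0 + T)
          · left
            refine ⟨?_, hxI⟩
            have := rep_mk (T := T) hxI
            simpa [this] using hx1
          · right
            have : x = 0 + T := le_antisymm hx2.2 (by
              by_contra hlt
              push_neg at hlt
              exact hxI ⟨hx2.1.le, hlt⟩)
            simp [this]
        refine le_antisymm ?_ zero_le
        calc volume (((↑) : ℝ → AddCircle T) ⁻¹' ((rep T) ⁻¹' t) ∩ Ioc 0 (0 + T))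
            ≤ volume ((t ∩ Ico (0:ℝ) (0 + T)) ∪ {0 + T}) := measure_mono hsub
          _ ≤ volume (t ∩ Ico (0:ℝ) (0 + T)) + volume ({0 + T} : Set ℝ) := measure_union_le _ _
          _ ≤ volume t + 0 := by
              rw [Real.volume_singleton]
              exact add_le_add (measure_mono Set.inter_subset_left) le_rfl
          _ = 0 := by rw [htv, add_zero]



lemma integrable_texp (μ : Measure ℝ) [IsFiniteMeasure μ] (a : ℂ) (ha : a.re = 0) :
    Integrable (fun θ : ℝ => Complex.exp (a * θ)) μ := by
  refine Integrable.mono' (integrable_const 1)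
    ((Complex.continuous_exp.comp (continuous_const.mul Complex.continuous_ofReal)).aestronglyMeasurable)
    (Filter.Eventually.of_forall fun θ => ?_)
  rw [Complex.norm_exp]
  have : (a * θ).re = 0 := by
    rw [Complex.mul_re]
    simp [ha]
  rw [this, Real.exp_zero]

lemma fact_two_pi : Fact (0 < 2 * π) := ⟨by positivity⟩

attribute [local instance] fact_two_pi

lemma integral_fourier_map (μ : Measure ℝ) [IsFiniteMeasure μ] (n : ℤ) :
    ∫ z, fourier n z ∂(Measure.map ((↑) : ℝ → AddCircle (2*π)) μ)
      = ∫ θ : ℝ, Complex.exp (Complex.I * n * θ) ∂μ := by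
  rw [integral_map AddCircle.measurable_mk'.aemeasurable
    (map_continuous (fourier n)).aestronglyMeasurable]
  refine integral_congr_ae (Filter.Eventually.of_forall fun θ => ?_)
  show (fourier n) ((θ : ℝ) : AddCircle (2*π)) = _
  rw [fourier_coe_apply]
  congr 1
  have hπ : (π : ℂ) ≠ 0 := by exact_mod_cast Real.pi_ne_zero
  push_cast
  field_simp


set_option maxHeartbeats 1000000 in
lemma measure_ext_exp (P Q : Measure ℝ) [IsFiniteMeasure P] [IsFiniteMeasure Q]
    (hP : P (Ico (0:ℝ) (0 + 2*π))ᶜ = 0) (hQ : Q (Ico (0:ℝ) (0 + 2*π))ᶜ = 0)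
    (h : ∀ n : ℤ, ∫ θ : ℝ, Complex.exp (Complex.I * n * θ) ∂P
       = ∫ θ : ℝ, Complex.exp (Complex.I * n * θ) ∂Q) : P = Q := by
  haveI : IsFiniteMeasure (Measure.map ((↑) : ℝ → AddCircle (2*π)) P) :=
    Measure.isFiniteMeasure_map P _
  haveI : IsFiniteMeasure (Measure.map ((↑) : ℝ → AddCircle (2*π)) Q) :=
    Measure.isFiniteMeasure_map Q _
  have hmap : Measure.map ((↑) : ℝ → AddCircle (2*π)) P
      = Measure.map ((↑) : ℝ → AddCircle (2*π)) Q :=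
    measure_ext_fourier _ _ (fun n => by
      rw [integral_fourier_map, integral_fourier_map, h])
  calc P = Measure.map (rep (2*π)) (Measure.map ((↑) : ℝ → AddCircle (2*π)) P) :=
        (map_rep_map_mk P hP).symm
    _ = Measure.map (rep (2*π)) (Measure.map ((↑) : ℝ → AddCircle (2*π)) Q) := by rw [hmap]
    _ = Q := map_rep_map_mk Q hQ

set_option maxHeartbeats 2000000 in
lemma rieszFischer (μ0 : Measure ℝ) [IsFiniteMeasure μ0]
    (hsupp : μ0 (Ico (0:ℝ) (0 + 2*π))ᶜ = 0)
    (c : ℤ → ℂ) (hc : ∀ n : ℤ, ∫ θ : ℝ, Complex.exp (Complex.I * n * θ) ∂μ0 = c n)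
    (hsum : Summable fun n : ℤ => ‖c n‖ ^ 2) : μ0 ≪ (volume : Measure ℝ) := by
  set P := Measure.map ((↑) : ℝ → AddCircle (2*π)) μ0 with hPdef
  haveI : IsFiniteMeasure P := Measure.isFiniteMeasure_map μ0 _
  have h2pi : ((2*π : ℝ) : ℂ) ≠ 0 := by
    exact_mod_cast (by positivity : (0:ℝ) < 2*π).ne'
  set d : ℤ → ℂ := fun m => c (-m) / ((2*π : ℝ) : ℂ) with hd
  have hsum' : Summable (fun m : ℤ => ‖d m‖ ^ 2) := by
    have h1 : Summable fun m : ℤ => ‖c (-m)‖ ^ 2 := (Equiv.neg ℤ).summable_iff.mpr hsum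
    refine (h1.mul_right (((2*π)^2)⁻¹)).congr (fun m => ?_)
    rw [hd]
    simp only [norm_div, div_pow, Complex.norm_real, Real.norm_eq_abs,
      abs_of_pos (by positivity : (0:ℝ) < 2*π)]
    rw [div_eq_mul_inv]
  have hmem : Memℓp d 2 := memℓp_gen (by
    have : ((2:ℝ≥0∞)).toReal = (2 : ℝ) := by norm_num
    rw [this]
    refine hsum'.congr fun m => ?_
    rw [← Real.rpow_natCast ‖d m‖ 2]
    norm_num)
  set f0 : Lp ℂ 2 (@haarAddCircle (2*π) _) := fourierBasis.repr.symm ⟨d, hmem⟩ with hf0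
  have hcoeff : ∀ m : ℤ, fourierCoeff (f0 : AddCircle (2*π) → ℂ) m = d m := by
    intro m
    rw [← fourierBasis_repr, hf0, LinearIsometryEquiv.apply_symm_apply]
  have hint_haar : Integrable (f0 : AddCircle (2*π) → ℂ) haarAddCircle :=
    (Lp.memLp f0).integrable (by norm_num)
  have hint : Integrable (f0 : AddCircle (2*π) → ℂ) (volume : Measure (AddCircle (2*π))) := by
    rw [volume_eq_smul_haarAddCircle]
    exact hint_haar.smul_measure ENNReal.ofReal_ne_top
  have hfour : ∀ n : ℤ, ∫ x, fourier n x ∂P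
      = ∫ x, fourier n x * (f0 : AddCircle (2*π) → ℂ) x ∂(volume : Measure (AddCircle (2*π))) := by
    intro n
    have lhs : ∫ x, fourier n x ∂P = c n := by
      rw [hPdef, integral_fourier_map]
      exact hc n
    have rhs : ∫ x, fourier n x * (f0 : AddCircle (2*π) → ℂ) x
        ∂(volume : Measure (AddCircle (2*π)))
        = (2*π : ℝ) * fourierCoeff (f0 : AddCircle (2*π) → ℂ) (-n) := by
      rw [volume_eq_smul_haarAddCircle, integral_smul_measure,
        ENNReal.toReal_ofReal (by positivity : (0:ℝ) ≤ 2*π)]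
      rw [fourierCoeff]
      simp only [neg_neg, smul_eq_mul]
      rw [Complex.real_smul]
    rw [lhs, rhs, hcoeff, hd]
    simp only [neg_neg]
    rw [mul_div_cancel₀ _ h2pi]
  have hPac : P ≪ (volume : Measure (AddCircle (2*π))) :=
    absCont_of_integral_eq P volume _ hint (integral_eq_of_fourier P volume _ hint hfour)
  exact absCont_of_circle μ0 hsupp hPac

end Stmt7Aux

open Stmt7Aux in
set_option maxHeartbeats 2000000 in
/-- If `A` is `V`-smooth, i.e. `Σ_{n∈ℤ} ‖A Vⁿ φ‖² ≤ C ‖φ‖²` for all `φ`, then the closure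
of the range of `A*` lies in the absolutely continuous subspace of the unitary `V`.  The
spectral measure of `V` is encoded through the scalar measures `μ ψ` on `[0, 2π)`
characterised by `∫ e^{−inθ} dμ_ψ(θ) = ⟪Vⁿ ψ, ψ⟫` for all `n ∈ ℤ`, and `ψ ∈ H_ac(V)`
means `μ ψ ≪ Lebesgue`. -/
theorem stmt7 {H K : Type*}
    [NormedAddCommGroup H] [InnerProductSpace ℂ H] [CompleteSpace H]
    [NormedAddCommGroup K] [InnerProductSpace ℂ K] [CompleteSpace K]
    (V : H ≃L[ℂ] H) (hV : ∀ x y : H, (inner ℂ (V x) (V y) : ℂ) = inner ℂ x y)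
    (μ : H → Measure ℝ) (hμfin : ∀ ψ, IsFiniteMeasure (μ ψ))
    (hμsupp : ∀ ψ, μ ψ (Set.Ico 0 (2 * Real.pi))ᶜ = 0)
    (hspec : ∀ (ψ : H) (n : ℤ),
      (∫ θ, Complex.exp (-Complex.I * n * θ) ∂(μ ψ)) = (inner ℂ ((V ^ n) ψ) ψ : ℂ))
    (A : H →L[ℂ] K) (C : ℝ)
    (hsmooth : ∀ φ : H,
      Summable (fun n : ℤ => ‖A ((V ^ n) φ)‖ ^ 2) ∧
      (∑' n : ℤ, ‖A ((V ^ n) φ)‖ ^ 2) ≤ C * ‖φ‖ ^ 2) :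
    closure (Set.range (adjoint A)) ⊆ {ψ : H | μ ψ ≪ volume} := by
  haveI : ∀ b : H, IsFiniteMeasure (μ b) := hμfin
  intro ψ hψ
  simp only [Set.mem_setOf_eq]
  have key : ∀ (b : H) (n : ℤ), ∫ θ : ℝ, Complex.exp (Complex.I * n * θ) ∂(μ b)
      = (inner ℂ ((V ^ (-n)) b) b : ℂ) := by
    intro b n
    rw [← hspec b (-n)]
    refine integral_congr_ae (Filter.Eventually.of_forall fun θ => ?_)
    show Complex.exp _ = Complex.exp _
    refine congrArg Complex.exp ?_
    push_cast
    ring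
  have hsupp' : ∀ b : H, μ b (Set.Ico (0:ℝ) (0 + 2*π))ᶜ = 0 := by
    intro b; rw [zero_add]; exact hμsupp b
  have mass : ∀ b : H, μ b Set.univ = ENNReal.ofReal (‖b‖^2) := by
    intro b
    have h0 := key b 0
    have hv : ((V ^ (-(0:ℤ))) b) = b := by
      rw [neg_zero, zpow_zero]
      rfl
    rw [hv] at h0
    simp only [Int.cast_zero, mul_zero, zero_mul, Complex.exp_zero, integral_const,
      Complex.real_smul, mul_one] at h0
    have hbb : (inner ℂ b b : ℂ) = ((‖b‖^2 : ℝ) : ℂ) := by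
      rw [inner_self_eq_norm_sq_to_K]
      norm_cast
    rw [hbb] at h0
    rw [← Complex.ofReal_inj.mp h0, measureReal_def, ENNReal.ofReal_toReal (measure_ne_top _ _)]
  have hInt : ∀ (c : H) (n : ℤ),
      Integrable (fun θ : ℝ => Complex.exp (Complex.I * n * θ)) (μ c) := by
    intro c n
    have he : (fun θ : ℝ => Complex.exp (Complex.I * n * θ))
        = fun θ : ℝ => Complex.exp ((Complex.I * n) * θ) := by
      funext θ; rw [mul_assoc]
    rw [he]
    exact integrable_texp _ _ (by simp)
  have hpar : ∀ a b : H, μ (a + b) + μ (a - b) = μ a + μ a + μ b + μ b := by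
    intro a b
    refine measure_ext_exp _ _ ?_ ?_ ?_
    · simp only [Measure.add_apply]
      rw [hsupp' (a+b), hsupp' (a-b), add_zero]
    · simp only [Measure.add_apply]
      rw [hsupp' a, hsupp' b]
      simp
    · intro n
      rw [integral_add_measure (hInt _ n) (hInt _ n)]
      rw [integral_add_measure (((hInt _ n).add_measure (hInt _ n)).add_measure (hInt _ n))
        (hInt _ n)]
      rw [integral_add_measure ((hInt _ n).add_measure (hInt _ n)) (hInt _ n)]
      rw [integral_add_measure (hInt _ n) (hInt _ n)]
      simp only [key]
      simp only [map_add, map_sub, inner_add_left, inner_add_right, inner_sub_left,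
        inner_sub_right]
      ring
  have hrange : ∀ φK : K, μ ((adjoint A) φK) ≪ (volume : Measure ℝ) := by
    intro φK
    set ψ0 := (adjoint A) φK with hψ0
    refine rieszFischer (μ ψ0) (hsupp' ψ0) (fun n => (inner ℂ ((V ^ (-n)) ψ0) ψ0 : ℂ))
      (fun n => key ψ0 n) ?_
    have hb : ∀ n : ℤ, ‖(inner ℂ ((V ^ (-n)) ψ0) ψ0 : ℂ)‖ ^ 2
        ≤ ‖A ((V ^ (-n)) ψ0)‖^2 * ‖φK‖^2 := by
      intro n
      have h1 : (inner ℂ ((V ^ (-n)) ψ0) ψ0 : ℂ) = inner ℂ (A ((V ^ (-n)) ψ0)) φK := by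
        rw [hψ0, ContinuousLinearMap.adjoint_inner_right]
      rw [h1, ← mul_pow]
      exact pow_le_pow_left₀ (norm_nonneg _) (norm_inner_le_norm _ _) 2
    refine Summable.of_nonneg_of_le (fun n => sq_nonneg _) hb ?_
    have hsummul := ((hsmooth ψ0).1).mul_right (‖φK‖^2)
    exact (Equiv.neg ℤ).summable_iff.mpr hsummul
  intro s hs
  refine le_antisymm ?_ zero_le
  refine ENNReal.le_of_forall_pos_le_add (fun ε hε _ => ?_)
  have hεR : (0:ℝ) < (ε:ℝ) := hε
  have hεhalf : (0:ℝ) < (ε:ℝ)/2 := by positivity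
  obtain ⟨a, ha, hdist⟩ := Metric.mem_closure_iff.mp hψ (Real.sqrt ((ε:ℝ)/2))
    (Real.sqrt_pos.mpr hεhalf)
  obtain ⟨φK, rfl⟩ := ha
  set b := ψ - (adjoint A) φK with hb
  have hab : (adjoint A) φK + b = ψ := by rw [hb, add_sub_cancel]
  have h1 : μ ψ s ≤ μ ((adjoint A) φK) s + μ ((adjoint A) φK) s + μ b s + μ b s := by
    calc μ ψ s = μ ((adjoint A) φK + b) s := by rw [hab]
      _ ≤ μ ((adjoint A) φK + b) s + μ ((adjoint A) φK - b) s := le_self_add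
      _ = (μ ((adjoint A) φK + b) + μ ((adjoint A) φK - b)) s := (Measure.add_apply _ _ _).symm
      _ = (μ ((adjoint A) φK) + μ ((adjoint A) φK) + μ b + μ b) s := by rw [hpar]
      _ = μ ((adjoint A) φK) s + μ ((adjoint A) φK) s + μ b s + μ b s := by
          simp [Measure.add_apply]
  have hAs : μ ((adjoint A) φK) s = 0 := hrange φK hs
  have hbs : μ b s ≤ ENNReal.ofReal ((ε:ℝ)/2) := by
    refine le_trans (measure_mono (Set.subset_univ s)) ?_
    rw [mass b]
    refine ENNReal.ofReal_le_ofReal ?_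
    have hlt : ‖b‖ < Real.sqrt ((ε:ℝ)/2) := by
      rw [hb, ← dist_eq_norm]
      exact hdist
    nlinarith [norm_nonneg b, Real.sq_sqrt hεhalf.le, Real.sqrt_nonneg ((ε:ℝ)/2)]
  rw [zero_add]
  calc μ ψ s ≤ μ ((adjoint A) φK) s + μ ((adjoint A) φK) s + μ b s + μ b s := h1
    _ = μ b s + μ b s := by rw [hAs]; simp
    _ ≤ ENNReal.ofReal ((ε:ℝ)/2) + ENNReal.ofReal ((ε:ℝ)/2) := add_le_add hbs hbs
    _ = ENNReal.ofReal ((ε:ℝ)/2 + (ε:ℝ)/2) := (ENNReal.ofReal_add hεhalf.le hεhalf.le).symm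
    _ = ENNReal.ofReal (ε:ℝ) := by norm_num
    _ = (ε : ℝ≥0∞) := ENNReal.ofReal_coe_nnreal
end
end

section
/- Let V be unitary and D bounded self-adjoint with C = V[V*,D] ≥ 0. For any φ and integers a ≤ b, Σ_{n=a}^{b} ‖C^{1/2} V^n φ‖² ≤ 2‖D‖‖φ‖². Consequently Σ_{n∈ℤ} ‖C^{1/2} V^n φ‖² ≤ 2‖D‖‖φ‖², i.e. C^{1/2} is V-smooth. -/
open Real Complex ContinuousLinearMap

/-- Telescoping bound: with `V` unitary, `D` bounded self-adjoint, `C = V[V*,D] ≥ 0` and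
`S = C^{1/2}`, one has `Σ_{n=a}^{b} ‖C^{1/2} Vⁿ φ‖² ≤ 2‖D‖‖φ‖²` for all integers
`a ≤ b`, and consequently the full sum over `n ∈ ℤ` converges with
`Σ_{n∈ℤ} ‖C^{1/2} Vⁿ φ‖² ≤ 2‖D‖‖φ‖²` (`C^{1/2}` is `V`-smooth). -/
theorem stmt10 {H : Type*} [NormedAddCommGroup H] [InnerProductSpace ℂ H] [CompleteSpace H]
    (V : H ≃L[ℂ] H) (hV : adjoint (V : H →L[ℂ] H) = (V.symm : H →L[ℂ] H))
    (D : H →L[ℂ] H) (hD : IsSelfAdjoint D)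
    (C S : H →L[ℂ] H)
    (hC : C = (V : H →L[ℂ] H) ∘L
        (adjoint (V : H →L[ℂ] H) ∘L D - D ∘L adjoint (V : H →L[ℂ] H)))
    (hCpos : C.IsPositive) (hS : S.IsPositive) (hSsq : S ∘L S = C) :
    ∀ φ : H,
      (∀ a b : ℤ, a ≤ b →
        (∑ n ∈ Finset.Icc a b, ‖S ((V ^ n) φ)‖ ^ 2) ≤ 2 * ‖D‖ * ‖φ‖ ^ 2) ∧
      Summable (fun n : ℤ => ‖S ((V ^ n) φ)‖ ^ 2) ∧
      (∑' n : ℤ, ‖S ((V ^ n) φ)‖ ^ 2) ≤ 2 * ‖D‖ * ‖φ‖ ^ 2 := by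
  intro φ
  set ψ : ℤ → H := fun n => (V ^ n) φ with hψ
  -- step relations
  have hstep : ∀ n : ℤ, ψ n = V (ψ (n - 1)) := by
    intro n
    have : V ^ n = V * V ^ (n - 1) := by
      rw [← zpow_one_add V (n - 1)]; ring_nf
    simp only [hψ, this]; rfl
  have hsymm : ∀ n : ℤ, V.symm (ψ n) = ψ (n - 1) := by
    intro n
    rw [hstep n, ContinuousLinearEquiv.symm_apply_apply]
  -- norms are preserved
  have hVnorm : ∀ x : H, ‖(V : H →L[ℂ] H) x‖ = ‖x‖ := by
    intro x
    have h1 : (inner ℂ ((V : H →L[ℂ] H) x) ((V : H →L[ℂ] H) x) : ℂ) = inner ℂ x x := by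
      rw [← ContinuousLinearMap.adjoint_inner_left (V : H →L[ℂ] H), hV]
      simp
    have := congrArg (RCLike.re : ℂ → ℝ) h1
    rw [inner_self_eq_norm_sq, inner_self_eq_norm_sq] at this
    exact (sq_eq_sq₀ (norm_nonneg _) (norm_nonneg _)).mp this
  have hnorm : ∀ n : ℤ, ‖ψ n‖ = ‖φ‖ := by
    intro n
    induction n using Int.induction_on with
    | zero => show ‖(V ^ (0:ℤ)) φ‖ = ‖φ‖; rw [zpow_zero]; rfl
    | succ k ih =>
        have := hstep (k + 1)
        simp only [add_sub_cancel_right] at this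
        rw [this]
        calc ‖V (ψ k)‖ = ‖(V : H →L[ℂ] H) (ψ k)‖ := rfl
          _ = ‖ψ k‖ := hVnorm _
          _ = ‖φ‖ := ih
    | pred k ih =>
        rw [← hsymm (-k)]
        have h3 : ‖V.symm (ψ (-k))‖ = ‖ψ (-k)‖ := by
          have := hVnorm (V.symm (ψ (-k)))
          simpa [ContinuousLinearEquiv.apply_symm_apply] using this.symm
        rw [h3, ih]
  -- the energy function
  set f : ℤ → ℝ := fun n => (RCLike.re : ℂ → ℝ) (inner ℂ (ψ n) (D (ψ n)) : ℂ) with hf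
  have hfbound : ∀ n : ℤ, |f n| ≤ ‖D‖ * ‖φ‖ ^ 2 := by
    intro n
    have h1 : |f n| ≤ ‖(inner ℂ (ψ n) (D (ψ n)) : ℂ)‖ := RCLike.abs_re_le_norm _
    have h2 : ‖(inner ℂ (ψ n) (D (ψ n)) : ℂ)‖ ≤ ‖ψ n‖ * ‖D (ψ n)‖ := norm_inner_le_norm _ _
    have h3 : ‖D (ψ n)‖ ≤ ‖D‖ * ‖ψ n‖ := D.le_opNorm _
    calc |f n| ≤ ‖ψ n‖ * ‖D (ψ n)‖ := h1.trans h2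
      _ ≤ ‖ψ n‖ * (‖D‖ * ‖ψ n‖) := by
          exact mul_le_mul_of_nonneg_left h3 (norm_nonneg _)
      _ = ‖D‖ * ‖φ‖ ^ 2 := by rw [hnorm n]; ring
  -- telescoping identity
  have hg : ∀ n : ℤ, ‖S (ψ n)‖ ^ 2 = f n - f (n - 1) := by
    intro n
    have hSadj : adjoint S = S := hS.isSelfAdjoint.adjoint_eq
    have h1 : ‖S (ψ n)‖ ^ 2 = (RCLike.re : ℂ → ℝ) (inner ℂ (S (ψ n)) (S (ψ n)) : ℂ) :=
      (inner_self_eq_norm_sq _).symm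
    have h2 : (inner ℂ (S (ψ n)) (S (ψ n)) : ℂ) = inner ℂ (ψ n) (C (ψ n)) := by
      have hCS : C (ψ n) = S (S (ψ n)) := by rw [← hSsq]; rfl
      have h := ContinuousLinearMap.adjoint_inner_right S (ψ n) (S (ψ n))
      rw [hSadj] at h
      rw [hCS, ← h]
    have hCapp : C (ψ n) = D (ψ n) - (V : H →L[ℂ] H) (D (V.symm (ψ n))) := by
      rw [hC]
      simp only [ContinuousLinearMap.comp_apply, ContinuousLinearMap.sub_apply,
        ContinuousLinearMap.coe_sub', Pi.sub_apply, hV]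
      rw [map_sub]
      congr 1
      exact V.apply_symm_apply (D (ψ n))
    have h3 : (inner ℂ (ψ n) ((V : H →L[ℂ] H) (D (V.symm (ψ n)))) : ℂ)
        = inner ℂ (ψ (n - 1)) (D (ψ (n - 1))) := by
      have := ContinuousLinearMap.adjoint_inner_left (V : H →L[ℂ] H) (D (V.symm (ψ n))) (ψ n)
      rw [hV] at this
      rw [← this]
      have hx : (V.symm : H →L[ℂ] H) (ψ n) = ψ (n - 1) := hsymm n
      rw [hx, hsymm n]
    rw [h1, h2, hCapp, inner_sub_right, map_sub, h3]
  have hgnonneg : ∀ n : ℤ, 0 ≤ ‖S (ψ n)‖ ^ 2 := fun n => by positivity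
  -- partial sum bound
  have hsum : ∀ a b : ℤ, a ≤ b →
      (∑ n ∈ Finset.Icc a b, ‖S (ψ n)‖ ^ 2) = f b - f (a - 1) := by
    intro a b hab
    refine Int.le_induction
      (motive := fun b _ => (∑ n ∈ Finset.Icc a b, ‖S (ψ n)‖ ^ 2) = f b - f (a - 1)) ?_ ?_ b hab
    · rw [Finset.Icc_self, Finset.sum_singleton, hg a]
    · intro k hk ih
      have hins : Finset.Icc a (k + 1) = insert (k + 1) (Finset.Icc a k) := by
        ext x; simp only [Finset.mem_Icc, Finset.mem_insert]; omega
      have hnotmem : (k + 1) ∉ Finset.Icc a k := by simp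
      rw [hins, Finset.sum_insert hnotmem, ih, hg (k + 1)]
      simp only [add_sub_cancel_right]
      ring
  have hbound : ∀ a b : ℤ, a ≤ b →
      (∑ n ∈ Finset.Icc a b, ‖S (ψ n)‖ ^ 2) ≤ 2 * ‖D‖ * ‖φ‖ ^ 2 := by
    intro a b hab
    rw [hsum a b hab]
    have h1 := hfbound b
    have h2 := hfbound (a - 1)
    have := abs_le.mp h1
    have := abs_le.mp h2
    nlinarith [abs_le.mp h1, abs_le.mp h2]
  have hc0 : (0 : ℝ) ≤ 2 * ‖D‖ * ‖φ‖ ^ 2 := by positivity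
  have hfin : ∀ u : Finset ℤ, (∑ n ∈ u, ‖S (ψ n)‖ ^ 2) ≤ 2 * ‖D‖ * ‖φ‖ ^ 2 := by
    intro u
    rcases u.eq_empty_or_nonempty with rfl | hu
    · simpa using hc0
    · have hincl : u ⊆ Finset.Icc (u.min' hu) (u.max' hu) := by
        intro x hx
        exact Finset.mem_Icc.mpr ⟨u.min'_le x hx, u.le_max' x hx⟩
      calc (∑ n ∈ u, ‖S (ψ n)‖ ^ 2)
          ≤ ∑ n ∈ Finset.Icc (u.min' hu) (u.max' hu), ‖S (ψ n)‖ ^ 2 :=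
            Finset.sum_le_sum_of_subset_of_nonneg hincl (fun i _ _ => hgnonneg i)
        _ ≤ 2 * ‖D‖ * ‖φ‖ ^ 2 :=
            hbound _ _ ((u.min'_le _ (u.max'_mem hu)))
  have hsummable : Summable (fun n : ℤ => ‖S (ψ n)‖ ^ 2) :=
    summable_of_sum_le (fun n => hgnonneg n) hfin
  exact ⟨hbound, hsummable, Summable.tsum_le_of_sum_le hsummable hfin⟩
end

section
/- For 0 ≤ κ ≤ 1 and all real ω, the Fourier transform of φ(t) = iπ e^{−2|t|} t^{−1}(1 − cos(κt) − i sin(κt)) equals π·arctan(n(ω,κ)/d(ω,κ)) with n(ω,κ) = 4κ[(4+ω²)² + κω(4+ω²) + κ²(4−ω²) − κ³ω] and d(ω,κ) = (4+ω²)³ − 2κ²ω²(4+ω²) − 16κ³ω − κ⁴(4−ω²), and this Fourier transform is strictly positive for all ω when 0 < κ ≤ 1. -/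
open Real Complex MeasureTheory Set Filter
open scoped Topology

lemma arctan_step3 (κ Q P : ℝ) (hQ : Q ≠ 0) (hm : Q - 2*κ ≠ 0) (hp : Q + 2*κ ≠ 0)
    (hP : P ≠ 0) (hcc : 1 - (2*κ/Q) * (2*κ/Q) ≠ 0) :
    (4*κ*Q*P) / ((Q - 2*κ)*(Q + 2*κ)*P) = (2*κ/Q + 2*κ/Q)/(1 - (2*κ/Q)*(2*κ/Q)) := by
  rw [div_eq_div_iff]
  · field_simp
    ring
  · intro h
    exact hm (by
      rcases mul_eq_zero.1 h with h' | h'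
      · rcases mul_eq_zero.1 h' with h'' | h''
        · exact h''
        · exact (hp h'').elim
      · exact (hP h').elim)
  · exact hcc

lemma arctan_main (κ ω : ℝ) (hκ0 : 0 ≤ κ) (hκ1 : κ ≤ 1) :
    Real.arctan
          ((4 * κ * ((4 + ω ^ 2) ^ 2 + κ * ω * (4 + ω ^ 2) + κ ^ 2 * (4 - ω ^ 2)
              - κ ^ 3 * ω)) /
            ((4 + ω ^ 2) ^ 3 - 2 * κ ^ 2 * ω ^ 2 * (4 + ω ^ 2) - 16 * κ ^ 3 * ω
              - κ ^ 4 * (4 - ω ^ 2)))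
      = 2 * (Real.arctan ((κ - ω)/2) + Real.arctan (ω/2)) := by
  obtain ⟨Q, hQdef⟩ : ∃ q : ℝ, q = 4 - ω*κ + ω^2 := ⟨_, rfl⟩
  obtain ⟨P, hPdef⟩ : ∃ p : ℝ, p = (ω + κ)^2 + 4 := ⟨_, rfl⟩
  have hQ : 15/4 ≤ Q := by rw [hQdef]; nlinarith [sq_nonneg (ω - κ/2), sq_nonneg κ]
  have hQ0 : (0:ℝ) < Q := by linarith
  have h2k : 2*κ < Q := by linarith
  have hP0 : (0:ℝ) < P := by rw [hPdef]; positivity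
  obtain ⟨c, hcdef⟩ : ∃ c : ℝ, c = 2*κ/Q := ⟨_, rfl⟩
  have hc0 : 0 ≤ c := by rw [hcdef]; positivity
  have hc1 : c < 1 := by rw [hcdef, div_lt_one hQ0]; linarith
  have hcc : c * c < 1 := by nlinarith
  have hccne : 1 - c * c ≠ 0 := by intro h; nlinarith
  have hab : ((κ - ω)/2) * (ω/2) < 1 := by nlinarith [sq_nonneg (ω - κ/2)]
  have step1 : Real.arctan ((κ - ω)/2) + Real.arctan (ω/2) = Real.arctan c := by
    rw [Real.arctan_add hab]
    congr 1
    have h4 : (1 : ℝ) - (κ - ω)/2 * (ω/2) = Q/4 := by rw [hQdef]; ring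
    rw [hcdef, h4]
    rw [div_eq_div_iff (by positivity) (by positivity)]
    ring
  have hnum : (4 * κ * ((4 + ω ^ 2) ^ 2 + κ * ω * (4 + ω ^ 2) + κ ^ 2 * (4 - ω ^ 2)
              - κ ^ 3 * ω)) = 4*κ*Q*P := by rw [hQdef, hPdef]; ring
  have hden : ((4 + ω ^ 2) ^ 3 - 2 * κ ^ 2 * ω ^ 2 * (4 + ω ^ 2) - 16 * κ ^ 3 * ω
              - κ ^ 4 * (4 - ω ^ 2)) = (Q - 2*κ)*(Q + 2*κ)*P := by rw [hQdef, hPdef]; ring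
  have step3 := arctan_step3 κ Q P hQ0.ne' (by linarith) (by positivity) hP0.ne'
      (by rw [← hcdef]; exact hccne)
  rw [hnum, hden, step3, ← hcdef, ← Real.arctan_add hcc, ← step1]
  ring

lemma exp_int_Ioi {c : ℂ} (hc : c.re < 0) :
    ∫ t in Ioi (0:ℝ), Complex.exp (c * t) = -c⁻¹ := by
  have hc0 : c ≠ 0 := fun h => by simp [h] at hc
  have hd : ∀ x ∈ Ici (0:ℝ), HasDerivAt (fun t : ℝ => Complex.exp (c * t) / c)
      (Complex.exp (c * x)) x := by
    intro x _
    have h1 : HasDerivAt (fun t : ℝ => c * (t : ℂ)) c x := by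
      simpa using (Complex.ofRealCLM.hasDerivAt (x := x)).const_mul c
    have := h1.cexp.div_const c
    simpa [mul_comm, mul_div_assoc, mul_div_cancel_left₀ _ hc0] using this
  have hint : IntegrableOn (fun t : ℝ => Complex.exp (c * t)) (Ioi 0) := by
    refine (exp_neg_integrableOn_Ioi 0 (by linarith : (0:ℝ) < -c.re)).mono'
      (Continuous.aestronglyMeasurable (by fun_prop)) ?_
    filter_upwards with t
    simp only [Complex.norm_exp, Complex.mul_re, Complex.ofReal_re,
      Complex.ofReal_im, mul_zero, sub_zero, neg_mul, neg_neg, le_refl]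
  have hten : Tendsto (fun x : ℝ => Complex.exp (c * x) / c) atTop (𝓝 0) := by
    rw [tendsto_zero_iff_norm_tendsto_zero]
    have heq : (fun x : ℝ => ‖Complex.exp (c * x) / c‖) = fun x => Real.exp (c.re * x) / ‖c‖ := by
      funext x
      simp [Complex.norm_exp]
    rw [heq]
    have h2 : Tendsto (fun x : ℝ => c.re * x) atTop atBot :=
      tendsto_id.const_mul_atTop_of_neg hc
    simpa using (Real.tendsto_exp_atBot.comp h2).div_const ‖c‖
  have := integral_Ioi_of_hasDerivAt_of_tendsto' hd hint hten
  rw [this]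
  simp [div_eq_mul_inv]

lemma integrable_exp_two_abs_Ioi :
    IntegrableOn (fun t : ℝ => Real.exp (-2 * |t|)) (Ioi 0) :=
  (exp_neg_integrableOn_Ioi 0 two_pos).congr_fun
    (fun x hx => by rw [abs_of_pos hx]) measurableSet_Ioi

lemma integrable_exp_two_abs : Integrable (fun t : ℝ => Real.exp (-2 * |t|)) := by
  rw [← integrableOn_univ, ← @Iio_union_Ici _ _ (0:ℝ), integrableOn_union,
    integrableOn_Ici_iff_integrableOn_Ioi]
  refine ⟨?_, integrable_exp_two_abs_Ioi⟩
  rw [← (Measure.measurePreserving_neg (volume : Measure ℝ)).integrableOn_comp_preimage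
      (Homeomorph.neg ℝ).measurableEmbedding]
  simpa [Function.comp_def, abs_neg] using integrable_exp_two_abs_Ioi

lemma integrable_phi (b : ℝ) :
    Integrable (fun t : ℝ => (Real.exp (-2 * |t|) : ℂ) * Complex.exp (Complex.I * b * t)) := by
  refine integrable_exp_two_abs.mono'
    (Continuous.aestronglyMeasurable (by fun_prop)) ?_
  filter_upwards with t
  simp [Complex.norm_exp, _root_.abs_of_nonneg (Real.exp_pos _).le]

lemma exp_int_line (b : ℝ) :
    ∫ t : ℝ, (Real.exp (-2 * |t|) : ℂ) * Complex.exp (Complex.I * b * t)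
      = 4 / (4 + (b:ℂ)^2) := by
  have h1 : (-2 + Complex.I * b : ℂ).re < 0 := by simp
  have h2 : (-2 - Complex.I * b : ℂ).re < 0 := by simp
  have hIoi : ∫ t in Ioi (0:ℝ), (Real.exp (-2 * |t|) : ℂ) * Complex.exp (Complex.I * b * t)
      = -(-2 + Complex.I * b : ℂ)⁻¹ := by
    rw [← exp_int_Ioi h1]
    refine setIntegral_congr_fun measurableSet_Ioi (fun t ht => ?_)
    rw [abs_of_pos ht, Complex.ofReal_exp, ← Complex.exp_add]
    congr 1
    push_cast
    ring
  have hIic : ∫ t in Iic (0:ℝ), (Real.exp (-2 * |t|) : ℂ) * Complex.exp (Complex.I * b * t)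
      = -(-2 - Complex.I * b : ℂ)⁻¹ := by
    have hc := integral_comp_neg_Iic (0:ℝ)
      (fun x : ℝ => Complex.exp ((-2 - Complex.I * b) * x))
    rw [neg_zero] at hc
    rw [← exp_int_Ioi h2, ← hc]
    refine setIntegral_congr_fun measurableSet_Iic (fun t ht => ?_)
    rw [abs_of_nonpos ht, Complex.ofReal_exp, ← Complex.exp_add]
    congr 1
    push_cast
    ring
  have hsplit := intervalIntegral.integral_Iic_add_Ioi (b := (0:ℝ))
    ((integrable_phi b).integrableOn) ((integrable_phi b).integrableOn)
  rw [← hsplit, hIic, hIoi]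
  have hb4 : (4 + (b:ℂ)^2) ≠ 0 := by
    have h : ((4 + b^2 : ℝ) : ℂ) ≠ 0 := by
      exact_mod_cast (by positivity : (4 + b^2 : ℝ) ≠ 0)
    push_cast at h
    exact h
  have e1 : (-2 - Complex.I * b : ℂ) ≠ 0 := by
    intro h
    have := congrArg Complex.re h
    simp at this
  have e2 : (-2 + Complex.I * b : ℂ) ≠ 0 := by
    intro h
    have := congrArg Complex.re h
    simp at this
  field_simp
  ring_nf
  simp [Complex.I_sq]

noncomputable def Faux (ω t s : ℝ) : ℂ :=
  (Real.pi : ℂ) * ((Real.exp (-2*|t|) : ℂ) *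
    Complex.exp (Complex.I * ((s - ω : ℝ) : ℂ) * t))


lemma Faux_key (κ ω : ℝ) (hκ0 : 0 ≤ κ) {t : ℝ} (ht : t ≠ 0) :
    (Complex.I * Real.pi * Real.exp (-2 * |t|) * (t : ℂ)⁻¹ *
          (1 - Real.cos (κ * t) - Complex.I * Real.sin (κ * t))) *
        Complex.exp (-Complex.I * ω * t)
      = ∫ s in Ioc (0:ℝ) κ, Faux ω t s := by
  have ht' : (t : ℂ) ≠ 0 := Complex.ofReal_ne_zero.2 ht
  have hIt : Complex.I * (t : ℂ) ≠ 0 := mul_ne_zero Complex.I_ne_zero ht'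
  rw [← intervalIntegral.integral_of_le hκ0]
  have hF : ∀ s : ℝ, Faux ω t s
      = ((Real.pi : ℂ) * (Real.exp (-2*|t|) : ℂ) * Complex.exp (-Complex.I * ω * t))
        * Complex.exp ((Complex.I * t) * s) := by
    intro s
    rw [Faux, show Complex.I * ((s - ω : ℝ):ℂ) * t
        = (-Complex.I * ω * t) + (Complex.I * t) * s by push_cast; ring,
      Complex.exp_add]
    ring
  simp_rw [hF]
  rw [intervalIntegral.integral_const_mul, integral_exp_mul_complex hIt]
  have hcs : (1:ℂ) - (Real.cos (κ * t) : ℂ) - Complex.I * (Real.sin (κ * t) : ℂ)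
      = 1 - Complex.exp (Complex.I * t * κ) := by
    rw [show Complex.I * (t:ℂ) * (κ:ℂ) = ((κ * t : ℝ) : ℂ) * Complex.I by push_cast; ring,
      Complex.exp_mul_I, Complex.ofReal_cos, Complex.ofReal_sin]
    ring
  rw [hcs]
  rw [Complex.ofReal_zero, mul_zero, Complex.exp_zero]
  field_simp
  ring_nf
  simp [Complex.I_sq]

lemma Faux_integrable (κ ω : ℝ) :
    Integrable (Function.uncurry (Faux ω))
      (volume.prod (volume.restrict (Ioc (0:ℝ) κ))) := by
  haveI : IsFiniteMeasure (volume.restrict (Ioc (0:ℝ) κ)) := by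
    constructor
    rw [Measure.restrict_apply_univ, Real.volume_Ioc]
    exact ENNReal.ofReal_lt_top
  have hbound : Integrable (fun z : ℝ × ℝ => (Real.pi * Real.exp (-2*|z.1|)) * (1:ℝ))
      (volume.prod (volume.restrict (Ioc (0:ℝ) κ))) :=
    (integrable_exp_two_abs.const_mul Real.pi).mul_prod (integrable_const 1)
  refine hbound.mono' (Continuous.aestronglyMeasurable ?_) ?_
  · apply Continuous.mul continuous_const
    apply Continuous.mul
    · exact Complex.continuous_ofReal.comp
        (Real.continuous_exp.comp (continuous_const.mul (_root_.continuous_abs.comp continuous_fst)))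
    · exact Complex.continuous_exp.comp (by fun_prop)
  · filter_upwards with z
    simp only [Function.uncurry, Faux, norm_mul, Complex.norm_real,
      Complex.norm_exp]
    have : (Complex.I * ((z.2 - ω : ℝ):ℂ) * (z.1:ℂ)).re = 0 := by
      simp [Complex.mul_re]
    rw [this]
    simp [_root_.abs_of_nonneg Real.pi_pos.le, _root_.abs_of_nonneg (Real.exp_pos _).le]

lemma Faux_inner (ω s : ℝ) :
    ∫ t : ℝ, Faux ω t s = ((Real.pi * (4 / (4 + (s - ω)^2)) : ℝ) : ℂ) := by
  simp only [Faux]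
  rw [integral_const_mul, exp_int_line (s - ω)]
  push_cast
  ring

lemma real_int (κ ω : ℝ) (hκ0 : 0 ≤ κ) :
    ∫ s in Ioc (0:ℝ) κ, Real.pi * (4 / (4 + (s - ω)^2))
      = 2 * Real.pi * Real.arctan ((κ - ω)/2) + 2 * Real.pi * Real.arctan (ω/2) := by
  rw [← intervalIntegral.integral_of_le hκ0]
  have hderiv : ∀ x ∈ uIcc (0:ℝ) κ,
      HasDerivAt (fun s : ℝ => 2 * Real.pi * Real.arctan ((s - ω)/2))
        (Real.pi * (4 / (4 + (x - ω)^2))) x := by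
    intro x _
    have h1 : HasDerivAt (fun s : ℝ => (s - ω)/2) (1/2) x :=
      ((hasDerivAt_id x).sub_const ω).div_const 2
    have h2 := (Real.hasDerivAt_arctan ((x - ω)/2)).comp x h1
    have h3 := h2.const_mul (2 * Real.pi)
    refine h3.congr_deriv ?_
    have hne : (1 + ((x - ω)/2)^2) ≠ 0 := by positivity
    have hne2 : (4 + (x - ω)^2) ≠ 0 := by positivity
    field_simp
    ring
  have hcont : Continuous (fun s : ℝ => Real.pi * (4 / (4 + (s - ω)^2))) := by
    apply continuous_const.mul
    apply continuous_const.div (by fun_prop)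
    intro s
    positivity
  rw [intervalIntegral.integral_eq_sub_of_hasDerivAt hderiv (hcont.intervalIntegrable 0 κ)]
  rw [show ((0:ℝ) - ω)/2 = -(ω/2) by ring, Real.arctan_neg]
  ring

/-- For `0 ≤ κ ≤ 1`, the Fourier transform of
`φ(t) = iπ e^{−2|t|} t⁻¹(1 − cos(κt) − i sin(κt))` is
`φ̂(ω) = π arctan(n(ω,κ)/d(ω,κ))` with
`n(ω,κ) = 4κ[(4+ω²)² + κω(4+ω²) + κ²(4−ω²) − κ³ω]` and
`d(ω,κ) = (4+ω²)³ − 2κ²ω²(4+ω²) − 16κ³ω − κ⁴(4−ω²)`, and `φ̂(ω) > 0` for all `ω`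
whenever `0 < κ ≤ 1`. -/
theorem stmt15 (κ : ℝ) (hκ0 : 0 ≤ κ) (hκ1 : κ ≤ 1) (ω : ℝ) :
    (∫ t : ℝ, (Complex.I * Real.pi * Real.exp (-2 * |t|) * (t : ℂ)⁻¹ *
          (1 - Real.cos (κ * t) - Complex.I * Real.sin (κ * t))) *
        Complex.exp (-Complex.I * ω * t))
      = ((Real.pi * Real.arctan
          ((4 * κ * ((4 + ω ^ 2) ^ 2 + κ * ω * (4 + ω ^ 2) + κ ^ 2 * (4 - ω ^ 2)
              - κ ^ 3 * ω)) /
            ((4 + ω ^ 2) ^ 3 - 2 * κ ^ 2 * ω ^ 2 * (4 + ω ^ 2) - 16 * κ ^ 3 * ω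
              - κ ^ 4 * (4 - ω ^ 2))) : ℝ) : ℂ) ∧
    (0 < κ →
      0 < Real.pi * Real.arctan
          ((4 * κ * ((4 + ω ^ 2) ^ 2 + κ * ω * (4 + ω ^ 2) + κ ^ 2 * (4 - ω ^ 2)
              - κ ^ 3 * ω)) /
            ((4 + ω ^ 2) ^ 3 - 2 * κ ^ 2 * ω ^ 2 * (4 + ω ^ 2) - 16 * κ ^ 3 * ω
              - κ ^ 4 * (4 - ω ^ 2)))) := by
  have h0 : ∀ᵐ t : ℝ, t ≠ 0 := by
    have hset : ({0} : Set ℝ) = {t : ℝ | ¬ t ≠ 0} := by ext x; simp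
    rw [ae_iff, ← hset]
    exact measure_singleton 0
  constructor
  · calc (∫ t : ℝ, (Complex.I * Real.pi * Real.exp (-2 * |t|) * (t : ℂ)⁻¹ *
          (1 - Real.cos (κ * t) - Complex.I * Real.sin (κ * t))) *
        Complex.exp (-Complex.I * ω * t))
        = ∫ t : ℝ, ∫ s in Ioc (0:ℝ) κ, Faux ω t s :=
          integral_congr_ae (h0.mono fun t ht => Faux_key κ ω hκ0 ht)
      _ = ∫ s in Ioc (0:ℝ) κ, ∫ t : ℝ, Faux ω t s :=
          integral_integral_swap (Faux_integrable κ ω)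
      _ = ∫ s in Ioc (0:ℝ) κ, ((Real.pi * (4 / (4 + (s - ω)^2)) : ℝ) : ℂ) :=
          setIntegral_congr_fun measurableSet_Ioc (fun s _ => Faux_inner ω s)
      _ = ((∫ s in Ioc (0:ℝ) κ, Real.pi * (4 / (4 + (s - ω)^2)) : ℝ) : ℂ) :=
          integral_ofReal (f := fun s => Real.pi * (4 / (4 + (s - ω)^2)))
      _ = _ := by
          rw [real_int κ ω hκ0, arctan_main κ ω hκ0 hκ1]
          push_cast
          ring
  · intro hκ
    rw [arctan_main κ ω hκ0 hκ1]
    have h1 : Real.arctan ((ω - κ)/2) < Real.arctan (ω/2) :=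
      Real.arctan_strictMono (by linarith)
    have h2 : Real.arctan ((κ - ω)/2) = - Real.arctan ((ω - κ)/2) := by
      rw [show (κ - ω)/2 = -((ω - κ)/2) by ring, Real.arctan_neg]
    have h3 : 0 < Real.arctan ((κ - ω)/2) + Real.arctan (ω/2) := by
      rw [h2]; linarith
    have := Real.pi_pos
    nlinarith
end

section
/- Let H₀ be self-adjoint with pure point spectrum, eigenbasis {φ_n}, H₀φ_n = α_n φ_n, and U = e^{iTH₀/ℏ}. Let A be strongly H₀-finite, i.e. Σ_n ‖Aφ_n‖ < ∞. Then for almost every θ ∈ [0, 2π) the trace Σ_n ‖Aφ_n‖²/|1 − e^{i(Tα_n/ℏ + θ)}|² is finite, and consequently G_ε(θ) = A(1 − U*e^{−i(θ−iε)})^{−1}(1 − U e^{i(θ+iε)})^{−1}A* has uniformly bounded trace norm as ε → 0⁺ for a.e. θ, so the strong limit G(θ) = s-lim_{ε→0⁺} G_ε(θ) exists for a.e. θ (A is U-finite). -/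
open Real Complex MeasureTheory ContinuousLinearMap Filter

set_option maxHeartbeats 1000000

section Helpers

lemma normsq_one_sub (r ψ : ℝ) :
    ‖1 - (r:ℂ) * Complex.exp (Complex.I * (ψ:ℂ))‖^2
      = (1 - r*Real.cos ψ)^2 + (r*Real.sin ψ)^2 := by
  rw [mul_comm Complex.I, Complex.exp_mul_I]
  rw [← Complex.ofReal_cos, ← Complex.ofReal_sin]
  have : (1 - (r:ℂ) * (↑(Real.cos ψ) + ↑(Real.sin ψ) * Complex.I))
      = ↑(1 - r*Real.cos ψ) + ↑(-(r*Real.sin ψ)) * Complex.I := by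
    push_cast; ring
  rw [this, Complex.sq_norm, Complex.normSq_add_mul_I]
  ring

lemma sixteen (r c s : ℝ) (hr0 : 0 < r) (hr1 : r ≤ 1) (h : s^2+c^2=1) :
    2 - 2*c ≤ 16*((1-r*c)^2+(r*s)^2) := by
  nlinarith [sq_nonneg (1-r), sq_nonneg (1+r), sq_nonneg (1-c), sq_nonneg s,
    sq_nonneg (r*s), mul_nonneg (mul_nonneg hr0.le hr0.le) (sq_nonneg s),
    sq_nonneg (1 - r*c), sq_nonneg (r - c), sq_nonneg (c+1), sq_nonneg (c-1),
    mul_nonneg hr0.le (sq_nonneg s)]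

lemma jordan (φ : ℝ) (h : |φ| ≤ π) : (4/π^2) * φ^2 ≤ 2 - 2*Real.cos φ := by
  have hπ := Real.pi_pos
  have hc : Real.cos φ = 2 * Real.cos (φ/2)^2 - 1 := by
    have := Real.cos_two_mul (φ/2); rw [mul_div_cancel₀ _ (by norm_num : (2:ℝ) ≠ 0)] at this; exact this
  have hs : Real.sin (φ/2)^2 = 1 - Real.cos (φ/2)^2 := by
    have := Real.sin_sq_add_cos_sq (φ/2); linarith
  have h1 : 2 - 2*Real.cos φ = 4 * Real.sin (φ/2)^2 := by rw [hc]; linarith [hs]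
  have h2 : Real.sin (|φ|/2)^2 = Real.sin (φ/2)^2 := by
    rcases abs_cases φ with ⟨he, _⟩ | ⟨he, _⟩ <;> rw [he]
    rw [neg_div, Real.sin_neg]; ring
  have h3 : 2/π * (|φ|/2) ≤ Real.sin (|φ|/2) :=
    Real.mul_le_sin (by positivity) (by rw [div_le_div_iff₀ (by norm_num) (by norm_num)]; nlinarith [abs_nonneg φ])
  have h4 : (2/π * (|φ|/2))^2 ≤ Real.sin (|φ|/2)^2 := by
    have := _root_.sq_abs φ
    nlinarith [h3, mul_nonneg (by positivity : (0:ℝ) ≤ 2/π) (by positivity : (0:ℝ) ≤ |φ|/2)]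
  rw [h1, ← h2]
  have : (2/π * (|φ|/2))^2 = (4/π^2) * φ^2 / 4 := by
    rw [mul_pow, div_pow, div_pow, _root_.sq_abs]; ring
  linarith [h4]

lemma cauchy_integrable (a c : ℝ) (ha : 0 < a) :
    Integrable (fun x : ℝ => a^2/((x-c)^2+a^2)) := by
  have h1 : Integrable (fun x : ℝ => (1 + x^2)⁻¹) := integrable_inv_one_add_sq
  have h2 : Integrable (fun x : ℝ => (1 + (x/a)^2)⁻¹) := by
    simpa using h1.comp_div (ne_of_gt ha)
  have h3 : Integrable (fun x : ℝ => (1 + ((x-c)/a)^2)⁻¹) := h2.comp_sub_right c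
  refine h3.congr (Filter.Eventually.of_forall fun x => ?_)
  field_simp; ring

lemma cauchy_integral (a c : ℝ) (ha : 0 < a) :
    ∫ x : ℝ, a^2/((x-c)^2+a^2) = π * a := by
  have e1 : ∀ x : ℝ, a^2/((x-c)^2+a^2) = (1 + ((x-c)/a)^2)⁻¹ := by
    intro x; field_simp; ring
  rw [funext e1]
  rw [integral_sub_right_eq_self (fun x => (1 + (x/a)^2)⁻¹) c]
  rw [Measure.integral_comp_div (fun x => (1 + x^2)⁻¹) a]
  rw [integral_univ_inv_one_add_sq, abs_of_pos ha, smul_eq_mul, mul_comm]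

lemma cauchy_lintegral (a c : ℝ) (ha : 0 ≤ a) :
    ∫⁻ x in Set.Ico (0:ℝ) (2*π), ENNReal.ofReal (a^2/((x-c)^2+a^2))
      ≤ ENNReal.ofReal (π * a) := by
  rcases eq_or_lt_of_le ha with h | h
  · simp only [← h]
    have : ∀ x : ℝ, (0:ℝ)^2/((x-c)^2+(0:ℝ)^2) = 0 := by
      intro x; simp
    simp [this, Real.pi_pos.le]
  · calc ∫⁻ x in Set.Ico (0:ℝ) (2*π), ENNReal.ofReal (a^2/((x-c)^2+a^2))
        ≤ ∫⁻ x : ℝ, ENNReal.ofReal (a^2/((x-c)^2+a^2)) :=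
          lintegral_mono' Measure.restrict_le_self le_rfl
      _ = ENNReal.ofReal (∫ x : ℝ, a^2/((x-c)^2+a^2)) := by
          rw [MeasureTheory.ofReal_integral_eq_lintegral_ofReal (cauchy_integrable a c h)]
          exact Filter.Eventually.of_forall fun x => by positivity
      _ = ENNReal.ofReal (π * a) := by rw [cauchy_integral a c h]

-- pointwise Cauchy-kernel domination
lemma pointwise_bound (a : ℝ) (han : 0 ≤ a) (β θ : ℝ) (hθ : θ ∈ Set.Ico (0:ℝ) (2*π)) :
    a^2 / ((2 - 2*Real.cos (β + θ)) + a^2)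
      ≤ (π^2/4) * ∑ j ∈ Finset.range 3,
          a^2 / ((θ - (2*π*(⌊β/(2*π)⌋ + j) - β))^2 + a^2) := by
  have hπ := Real.pi_pos
  have hsum_nonneg : ∀ j ∈ Finset.range 3,
      (0:ℝ) ≤ a^2 / ((θ - (2*π*(⌊β/(2*π)⌋ + j) - β))^2 + a^2) := by
    intro j _; positivity
  rcases eq_or_lt_of_le han with h0 | h0
  · rw [← h0]; simp only [ne_eq, OfNat.ofNat_ne_zero, not_false_eq_true, zero_pow, zero_div]
    positivity
  set ψ := β + θ with hψ
  set jstar : ℤ := round (ψ/(2*π)) with hjs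
  set φ := ψ - 2*π*jstar with hφ
  have hcos : Real.cos ψ = Real.cos φ := by
    rw [hφ]
    have := Real.cos_sub_int_mul_two_pi ψ jstar
    rw [← this]; ring_nf
  have habs : |φ| ≤ π := by
    have h1 : |ψ/(2*π) - jstar| ≤ 1/2 := abs_sub_round (ψ/(2*π))
    have h2 : φ = 2*π * (ψ/(2*π) - jstar) := by
      rw [hφ]; field_simp
    rw [h2, abs_mul, abs_of_pos (by positivity : (0:ℝ) < 2*π)]
    calc 2*π*|ψ/(2*π) - jstar| ≤ 2*π*(1/2) := by
          exact mul_le_mul_of_nonneg_left h1 (by positivity)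
      _ = π := by ring
  have hjordan := jordan φ habs
  -- jstar ∈ {m₀, m₀+1, m₀+2}
  set m₀ : ℤ := ⌊β/(2*π)⌋ with hm
  have hm1 : (m₀:ℝ) ≤ β/(2*π) := Int.floor_le _
  have hm2 : β/(2*π) < m₀ + 1 := Int.lt_floor_add_one _
  have hy1 : (m₀:ℝ) ≤ ψ/(2*π) := by
    rw [hψ]
    have : β/(2*π) ≤ (β+θ)/(2*π) := by
      apply div_le_div_of_nonneg_right _ (by positivity)
      · linarith [hθ.1]
    linarith
  have hy2 : ψ/(2*π) < m₀ + 2 := by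
    rw [hψ]
    have hθ2 : θ/(2*π) < 1 := by rw [div_lt_one (by positivity)]; exact hθ.2
    have he : (β+θ)/(2*π) = β/(2*π) + θ/(2*π) := by ring
    rw [he]; linarith
  have hround : |(ψ/(2*π)) - jstar| ≤ 1/2 := abs_sub_round _
  have hj1 : m₀ ≤ jstar := by
    have h' : (m₀:ℝ) - 1 < jstar := by
      have := abs_le.mp hround
      linarith
    have h'' : m₀ - 1 < jstar := by exact_mod_cast h'
    omega
  have hj2 : jstar ≤ m₀ + 2 := by
    have h' : (jstar:ℝ) < m₀ + 3 := by
      have := abs_le.mp hround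
      linarith
    have h'' : jstar < m₀ + 3 := by exact_mod_cast h'
    omega
  set k : ℕ := (jstar - m₀).toNat with hk
  have hk3 : k ∈ Finset.range 3 := by
    rw [Finset.mem_range, hk]
    omega
  have hkval : (m₀ : ℝ) + (k:ℝ) = jstar := by
    have : ((m₀ + (jstar - m₀).toNat : ℤ) : ℝ) = (jstar : ℝ) := by
      congr 1; omega
    push_cast at this ⊢
    linarith [this]
  -- single term
  have hterm : a^2/(φ^2 + a^2) ≤ ∑ j ∈ Finset.range 3,
      a^2 / ((θ - (2*π*(m₀ + j) - β))^2 + a^2) := by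
    have heq : φ = θ - (2*π*((m₀:ℝ) + (k:ℝ)) - β) := by
      rw [hφ, hψ, ← hkval]; ring
    calc a^2/(φ^2 + a^2) = a^2 / ((θ - (2*π*(m₀ + k) - β))^2 + a^2) := by rw [heq]
      _ ≤ _ := Finset.single_le_sum hsum_nonneg hk3
  -- denominator bound
  have hden : (4/π^2) * (φ^2 + a^2) ≤ (2 - 2*Real.cos ψ) + a^2 := by
    have h4 : (4:ℝ)/π^2 ≤ 1 := by
      rw [div_le_one (by positivity)]
      nlinarith [Real.pi_gt_three]
    rw [hcos]
    nlinarith [sq_nonneg a]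
  have hgle : a^2 / ((2 - 2*Real.cos ψ) + a^2) ≤ (π^2/4) * (a^2/(φ^2 + a^2)) := by
    have hd1 : (0:ℝ) < (4/π^2) * (φ^2 + a^2) := by positivity
    have h1 : a^2 / ((2 - 2*Real.cos ψ) + a^2) ≤ a^2 / ((4/π^2) * (φ^2 + a^2)) :=
      div_le_div_of_nonneg_left (by positivity) hd1 hden
    have h2 : a^2 / ((4/π^2) * (φ^2 + a^2)) = (π^2/4) * (a^2/(φ^2 + a^2)) := by
      field_simp
    linarith
  have hfinal := mul_le_mul_of_nonneg_left hterm (by positivity : (0:ℝ) ≤ π^2/4)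
  linarith

lemma ae_summable_g (a : ℕ → ℝ) (han : ∀ n, 0 ≤ a n) (ha : Summable a) (β : ℕ → ℝ) :
    ∀ᵐ θ ∂(volume.restrict (Set.Ico (0:ℝ) (2*π))),
      Summable (fun n => a n^2 / ((2 - 2*Real.cos (β n + θ)) + a n^2)) := by
  have hπ := Real.pi_pos
  set g : ℕ → ℝ → ℝ := fun n θ => a n^2 / ((2 - 2*Real.cos (β n + θ)) + a n^2) with hg
  have hgnn : ∀ n θ, 0 ≤ g n θ := by
    intro n θ
    have h2 : 0 ≤ 2 - 2*Real.cos (β n + θ) := by nlinarith [Real.cos_le_one (β n + θ)]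
    positivity
  have hmeas : ∀ n, Measurable (fun θ => ENNReal.ofReal (g n θ)) := by
    intro n
    apply Measurable.ennreal_ofReal
    exact (measurable_const.div (((Real.continuous_cos.comp (continuous_const.add
      continuous_id)).measurable.const_mul 2).const_sub 2 |>.add measurable_const))
  -- bound each lintegral
  have hint : ∀ n, ∫⁻ θ in Set.Ico (0:ℝ) (2*π), ENNReal.ofReal (g n θ)
      ≤ ENNReal.ofReal (π^2/4) * (3 * ENNReal.ofReal (π * a n)) := by
    intro n
    have hb : ∀ θ ∈ Set.Ico (0:ℝ) (2*π), ENNReal.ofReal (g n θ)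
        ≤ ENNReal.ofReal (π^2/4) * ∑ j ∈ Finset.range 3,
            ENNReal.ofReal (a n^2 / ((θ - (2*π*(⌊β n/(2*π)⌋ + j) - β n))^2 + a n^2)) := by
      intro θ hθ
      rw [← ENNReal.ofReal_sum_of_nonneg (fun j _ => by positivity),
        ← ENNReal.ofReal_mul (by positivity)]
      exact ENNReal.ofReal_le_ofReal (pointwise_bound (a n) (han n) (β n) θ hθ)
    calc ∫⁻ θ in Set.Ico (0:ℝ) (2*π), ENNReal.ofReal (g n θ)
        ≤ ∫⁻ θ in Set.Ico (0:ℝ) (2*π), ENNReal.ofReal (π^2/4) * ∑ j ∈ Finset.range 3,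
            ENNReal.ofReal (a n^2 / ((θ - (2*π*(⌊β n/(2*π)⌋ + j) - β n))^2 + a n^2)) := by
          exact setLIntegral_mono' measurableSet_Ico hb
      _ = ENNReal.ofReal (π^2/4) * ∑ j ∈ Finset.range 3, ∫⁻ θ in Set.Ico (0:ℝ) (2*π),
            ENNReal.ofReal (a n^2 / ((θ - (2*π*(⌊β n/(2*π)⌋ + j) - β n))^2 + a n^2)) := by
          rw [lintegral_const_mul]
          · rw [lintegral_finset_sum]
            intro j _
            apply Measurable.ennreal_ofReal
            exact measurable_const.div ((measurable_id.sub measurable_const).pow_const 2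
              |>.add measurable_const)
          · apply Finset.measurable_sum
            intro j _
            apply Measurable.ennreal_ofReal
            exact measurable_const.div ((measurable_id.sub measurable_const).pow_const 2
              |>.add measurable_const)
      _ ≤ ENNReal.ofReal (π^2/4) * ∑ j ∈ Finset.range 3, ENNReal.ofReal (π * a n) := by
          gcongr with j hj
          exact cauchy_lintegral (a n) _ (han n)
      _ = ENNReal.ofReal (π^2/4) * (3 * ENNReal.ofReal (π * a n)) := by
          rw [Finset.sum_const, Finset.card_range]; simp [mul_comm]
  -- total
  have htot : ∫⁻ θ in Set.Ico (0:ℝ) (2*π), ∑' n, ENNReal.ofReal (g n θ) ≠ ⊤ := by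
    rw [lintegral_tsum (fun n => (hmeas n).aemeasurable)]
    apply ne_top_of_le_ne_top ?_ (ENNReal.tsum_le_tsum hint)
    have : ∑' n, ENNReal.ofReal (π^2/4) * (3 * ENNReal.ofReal (π * a n))
        = ENNReal.ofReal (π^2/4) * 3 * ENNReal.ofReal π * ∑' n, ENNReal.ofReal (a n) := by
      rw [← ENNReal.tsum_mul_left]
      congr 1; funext n
      rw [ENNReal.ofReal_mul hπ.le]; ring
    rw [this, ENNReal.ofReal_tsum_of_nonneg han ha |>.symm]
    exact ENNReal.mul_ne_top (ENNReal.mul_ne_top (ENNReal.mul_ne_top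
      ENNReal.ofReal_ne_top (by norm_num)) ENNReal.ofReal_ne_top) ENNReal.ofReal_ne_top
  have hae := ae_lt_top (Measurable.ennreal_tsum hmeas) htot
  filter_upwards [hae] with θ hθ
  have hne : ∑' n, ENNReal.ofReal (g n θ) ≠ ⊤ := hθ.ne
  have hsum := ENNReal.summable_toReal hne
  refine hsum.congr fun n => ?_
  rw [ENNReal.toReal_ofReal (hgnn n θ)]

variable {H K : Type*} [NormedAddCommGroup H] [InnerProductSpace ℂ H] [CompleteSpace H]
  [NormedAddCommGroup K] [InnerProductSpace ℂ K] [CompleteSpace K]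

lemma norm_isometry (U : H →L[ℂ] H) (hU₁ : adjoint U ∘L U = 1) (x : H) : ‖U x‖ = ‖x‖ := by
  have h : (inner ℂ (U x) (U x) : ℂ) = inner ℂ x x := by
    rw [← ContinuousLinearMap.adjoint_inner_left]
    change (inner ℂ ((adjoint U ∘L U) x) x : ℂ) = _
    rw [hU₁]; rfl
  rw [inner_self_eq_norm_sq_to_K (𝕜 := ℂ), inner_self_eq_norm_sq_to_K (𝕜 := ℂ)] at h
  have h2 : ‖U x‖^2 = ‖x‖^2 := by exact_mod_cast h
  nlinarith [norm_nonneg (U x), norm_nonneg x]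

lemma diag_inverse (V : H →L[ℂ] H) (hV : ‖V‖ ≤ 1) (c lam : ℂ) (hc : ‖c‖ < 1)
    (hlam : ‖lam‖ = 1) (e : H) (hVe : V e = lam • e) :
    Ring.inverse (1 - c • V) e = (1 - c * lam)⁻¹ • e := by
  have hnorm : ‖c • V‖ < 1 := by
    calc ‖c • V‖ = ‖c‖ * ‖V‖ := norm_smul c V
      _ ≤ ‖c‖ * 1 := by exact mul_le_mul_of_nonneg_left hV (norm_nonneg c)
      _ < 1 := by simpa using hc
  have hu : IsUnit ((1:H →L[ℂ] H) - c • V) := isUnit_one_sub_of_norm_lt_one hnorm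
  have hne : (1:ℂ) - c * lam ≠ 0 := by
    intro h
    have : ‖c * lam‖ = 1 := by
      have : c * lam = 1 := by linear_combination -h
      rw [this, norm_one]
    rw [norm_mul, hlam, mul_one] at this
    exact absurd this (ne_of_lt hc)
  set w : H := (1 - c * lam)⁻¹ • e with hw
  have hMw : ((1:H →L[ℂ] H) - c • V) w = e := by
    rw [hw]
    simp only [ContinuousLinearMap.sub_apply, ContinuousLinearMap.one_apply,
      ContinuousLinearMap.smul_apply, ContinuousLinearMap.map_smul, hVe]
    rw [smul_smul, smul_smul, ← sub_smul]
    have hsc : (1 - c * lam)⁻¹ - c * (1 - c * lam)⁻¹ * lam = 1 := by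
      field_simp
    rw [hsc, one_smul]
  calc Ring.inverse (1 - c • V) e = Ring.inverse (1 - c • V) (((1:H →L[ℂ] H) - c • V) w) := by
        rw [hMw]
    _ = (Ring.inverse (1 - c • V) * ((1:H →L[ℂ] H) - c • V)) w := rfl
    _ = w := by rw [Ring.inverse_mul_cancel _ hu]; rfl

lemma conj_inv_pair (z : ℂ) :
    (1 - z)⁻¹ * (1 - starRingEnd ℂ z)⁻¹ = ((‖1 - z‖^2 : ℝ) : ℂ)⁻¹ := by
  rw [← mul_inv]
  congr 1
  have h : (1 : ℂ) - starRingEnd ℂ z = starRingEnd ℂ (1 - z) := by rw [map_sub, map_one]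
  rw [h, Complex.mul_conj]
  norm_cast
  rw [Complex.sq_norm]

lemma rank_one_norm (u : K) (r : ℝ) (hr : 0 < r) :
    ‖((r : ℝ) : ℂ)⁻¹ • ((innerSL ℂ u).smulRight u)‖ ≤ ‖u‖^2 / r := by
  rw [norm_smul, ContinuousLinearMap.norm_smulRight_apply, innerSL_apply_norm,
    norm_inv, Complex.norm_real, Real.norm_of_nonneg hr.le, pow_two]
  rw [div_eq_inv_mul]


/-- HasSum formula for the composite operator applied to a vector. -/
lemma composite_hasSum (b : HilbertBasis ℕ ℂ H) (U : H →L[ℂ] H) (A : H →L[ℂ] K)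
    (hUnorm : ‖U‖ ≤ 1) (hAUnorm : ‖adjoint U‖ ≤ 1) (μc : ℕ → ℂ) (hμ : ∀ n, ‖μc n‖ = 1)
    (hUb : ∀ n, U (b n) = μc n • b n) (hadj : ∀ n, adjoint U (b n) = (μc n)⁻¹ • b n)
    (c₁ c₂ : ℂ) (hc₁ : ‖c₁‖ < 1) (hc₂ : ‖c₂‖ < 1) (x : K) :
    HasSum (fun n => ((inner ℂ (A (b n)) x : ℂ) * ((1 - c₁ * μc n)⁻¹ * (1 - c₂ * (μc n)⁻¹)⁻¹)) • A (b n))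
      ((A ∘L Ring.inverse (1 - c₂ • adjoint U) ∘L Ring.inverse (1 - c₁ • U) ∘L adjoint A) x) := by
  have hμinv : ∀ n, ‖(μc n)⁻¹‖ = 1 := fun n => by rw [norm_inv, hμ n, inv_one]
  have h1 : HasSum (fun n => (inner ℂ (b n) (adjoint A x) : ℂ) • b n) (adjoint A x) := by
    refine (b.hasSum_repr (adjoint A x)).congr_fun fun n => ?_
    rw [b.repr_apply_apply]
  have h2 : HasSum (fun n => ((inner ℂ (b n) (adjoint A x) : ℂ) * (1 - c₁ * μc n)⁻¹) • b n)
      (Ring.inverse (1 - c₁ • U) (adjoint A x)) := by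
    refine ((Ring.inverse (1 - c₁ • U)).hasSum h1).congr_fun fun n => ?_
    rw [ContinuousLinearMap.map_smul,
      diag_inverse U hUnorm c₁ (μc n) hc₁ (hμ n) (b n) (hUb n), smul_smul]
  have h3 : HasSum (fun n => ((inner ℂ (b n) (adjoint A x) : ℂ) * (1 - c₁ * μc n)⁻¹
        * (1 - c₂ * (μc n)⁻¹)⁻¹) • b n)
      (Ring.inverse (1 - c₂ • adjoint U) (Ring.inverse (1 - c₁ • U) (adjoint A x))) := by
    refine ((Ring.inverse (1 - c₂ • adjoint U)).hasSum h2).congr_fun fun n => ?_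
    rw [ContinuousLinearMap.map_smul,
      diag_inverse (adjoint U) hAUnorm c₂ ((μc n)⁻¹) hc₂ (hμinv n) (b n) (hadj n), smul_smul]
  have h5 : HasSum (fun n => ((inner ℂ (A (b n)) x : ℂ)
        * ((1 - c₁ * μc n)⁻¹ * (1 - c₂ * (μc n)⁻¹)⁻¹)) • A (b n))
      (A (Ring.inverse (1 - c₂ • adjoint U) (Ring.inverse (1 - c₁ • U) (adjoint A x)))) := by
    refine (A.hasSum h3).congr_fun fun n => ?_
    rw [ContinuousLinearMap.map_smul, ContinuousLinearMap.adjoint_inner_right, mul_assoc]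
  simpa only [ContinuousLinearMap.comp_apply] using h5

-- compare: ‖1 - w‖² ≤ 16 ‖1 - r w‖² for w = e^{iψ}, r ∈ (0,1]
lemma sixteen' (r ψ : ℝ) (hr0 : 0 < r) (hr1 : r ≤ 1) :
    ‖1 - Complex.exp (Complex.I * (ψ:ℂ))‖^2
      ≤ 16 * ‖1 - (r:ℝ) * Complex.exp (Complex.I * (ψ:ℂ))‖^2 := by
  have h1 := normsq_one_sub 1 ψ
  have h2 := normsq_one_sub r ψ
  rw [Complex.ofReal_one, one_mul] at h1
  rw [h1, h2]
  have h3 := Real.sin_sq_add_cos_sq ψ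
  have := sixteen r (Real.cos ψ) (Real.sin ψ) hr0 hr1 h3
  nlinarith [h3]

lemma d_pos_iff (ψ : ℝ) (h : 1 - Complex.exp (Complex.I * (ψ:ℂ)) ≠ 0) :
    0 < ‖1 - Complex.exp (Complex.I * (ψ:ℂ))‖^2 := by
  have := norm_pos_iff.mpr h
  positivity

lemma limit_part (b : HilbertBasis ℕ ℂ H) (U : H →L[ℂ] H) (A : H →L[ℂ] K)
    (hUnorm : ‖U‖ ≤ 1) (hAUnorm : ‖adjoint U‖ ≤ 1) (μc : ℕ → ℂ) (hμ : ∀ n, ‖μc n‖ = 1)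
    (hUb : ∀ n, U (b n) = μc n • b n) (hadj : ∀ n, adjoint U (b n) = (μc n)⁻¹ • b n)
    (θ : ℝ) (β : ℕ → ℝ) (hβ : ∀ n, μc n = Complex.exp (Complex.I * ((β n : ℝ) : ℂ)))
    (hd : ∀ n, (0:ℝ) < ‖1 - Complex.exp (Complex.I * ((β n + θ : ℝ) : ℂ))‖^2)
    (hsum : Summable fun n =>
      ‖A (b n)‖^2 / ‖1 - Complex.exp (Complex.I * ((β n + θ : ℝ) : ℂ))‖^2) :
    ∃ G : K →L[ℂ] K, ∀ x : K,
      Tendsto (fun ε : ℝ =>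
          (A ∘L Ring.inverse (1 - Complex.exp (-(Complex.I * ((θ : ℂ) - Complex.I * ε))) • adjoint U)
            ∘L Ring.inverse (1 - Complex.exp (Complex.I * ((θ : ℂ) + Complex.I * ε)) • U)
            ∘L adjoint A) x)
        (nhdsWithin 0 (Set.Ioi 0)) (nhds (G x)) := by
  classical
  have hf_summable : Summable (fun n => (((‖1 - Complex.exp (Complex.I * ((β n + θ : ℝ) : ℂ))‖^2 : ℝ)) : ℂ)⁻¹
      • ((innerSL ℂ (A (b n))).smulRight (A (b n)))) := by
    refine Summable.of_norm_bounded hsum fun n => ?_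
    exact rank_one_norm (A (b n)) _ (hd n)
  refine ⟨∑' n, (((‖1 - Complex.exp (Complex.I * ((β n + θ : ℝ) : ℂ))‖^2 : ℝ)) : ℂ)⁻¹
      • ((innerSL ℂ (A (b n))).smulRight (A (b n))), fun x => ?_⟩
  have hGx := (ContinuousLinearMap.apply ℂ K x).hasSum hf_summable.hasSum
  simp only [ContinuousLinearMap.apply_apply] at hGx
  have hGx2 := hGx.congr_fun
    (g := fun n => ((inner ℂ (A (b n)) x : ℂ)
      * (((‖1 - Complex.exp (Complex.I * ((β n + θ : ℝ) : ℂ))‖^2 : ℝ)) : ℂ)⁻¹) • A (b n))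
    (fun n => by
      simp only [ContinuousLinearMap.smul_apply, ContinuousLinearMap.smulRight_apply,
        innerSL_apply_apply]
      rw [smul_smul, mul_comm])
  -- dominated convergence
  have hDC := tendsto_tsum_of_dominated_convergence
    (𝓕 := nhdsWithin (0:ℝ) (Set.Ioi 0))
    (f := fun (ε : ℝ) (n : ℕ) => ((inner ℂ (A (b n)) x : ℂ)
      * (((‖1 - ((Real.exp (-ε) : ℝ) : ℂ) * Complex.exp (Complex.I * ((β n + θ : ℝ) : ℂ))‖^2 : ℝ)) : ℂ)⁻¹) • A (b n))
    (g := fun n => ((inner ℂ (A (b n)) x : ℂ)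
      * (((‖1 - Complex.exp (Complex.I * ((β n + θ : ℝ) : ℂ))‖^2 : ℝ)) : ℂ)⁻¹) • A (b n))
    (bound := fun n => ‖x‖ * (16 * (‖A (b n)‖^2 / ‖1 - Complex.exp (Complex.I * ((β n + θ : ℝ) : ℂ))‖^2)))
    (((hsum.mul_left 16).mul_left ‖x‖))
    (fun n => by
      have hcont : Continuous fun ε : ℝ =>
          (‖1 - ((Real.exp (-ε) : ℝ) : ℂ) * Complex.exp (Complex.I * ((β n + θ : ℝ) : ℂ))‖^2 : ℝ) := by
        fun_prop
      have h0 : (‖1 - ((Real.exp (-(0:ℝ)) : ℝ) : ℂ) * Complex.exp (Complex.I * ((β n + θ : ℝ) : ℂ))‖^2 : ℝ)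
          = ‖1 - Complex.exp (Complex.I * ((β n + θ : ℝ) : ℂ))‖^2 := by
        norm_num
      have h1 : Tendsto (fun ε : ℝ =>
          ((‖1 - ((Real.exp (-ε) : ℝ) : ℂ) * Complex.exp (Complex.I * ((β n + θ : ℝ) : ℂ))‖^2 : ℝ) : ℂ))
          (nhds 0) (nhds ((‖1 - Complex.exp (Complex.I * ((β n + θ : ℝ) : ℂ))‖^2 : ℝ) : ℂ)) := by
        rw [← h0]
        exact (Complex.continuous_ofReal.comp hcont).tendsto 0
      have h2 := h1.inv₀ (by
        simpa using (ne_of_gt (hd n)))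
      have h3 := ((h2.const_mul ((inner ℂ (A (b n)) x : ℂ))).smul_const (A (b n)))
      exact h3.mono_left nhdsWithin_le_nhds)
    (by
      filter_upwards [self_mem_nhdsWithin] with ε hε
      intro n
      have hε' : (0:ℝ) < ε := hε
      have hr0 : (0:ℝ) < Real.exp (-ε) := Real.exp_pos _
      have hr1 : Real.exp (-ε) ≤ 1 := Real.exp_le_one_iff.mpr (by linarith)
      have h16 := sixteen' (Real.exp (-ε)) (β n + θ) hr0 hr1
      have hN : (0:ℝ) < ‖1 - ((Real.exp (-ε) : ℝ) : ℂ) * Complex.exp (Complex.I * ((β n + θ : ℝ) : ℂ))‖^2 := by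
        nlinarith [hd n]
      rw [norm_smul, norm_mul, norm_inv, Complex.norm_real,
        Real.norm_of_nonneg hN.le]
      have hinner : ‖(inner ℂ (A (b n)) x : ℂ)‖ ≤ ‖A (b n)‖ * ‖x‖ := norm_inner_le_norm _ _
      have hNi : (‖1 - ((Real.exp (-ε) : ℝ) : ℂ) * Complex.exp (Complex.I * ((β n + θ : ℝ) : ℂ))‖^2)⁻¹
          ≤ 16 / ‖1 - Complex.exp (Complex.I * ((β n + θ : ℝ) : ℂ))‖^2 := by
        rw [inv_le_iff_one_le_mul₀ hN, div_mul_eq_mul_div, le_div_iff₀ (hd n)]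
        linarith [h16]
      calc ‖(inner ℂ (A (b n)) x : ℂ)‖
            * (‖1 - ((Real.exp (-ε) : ℝ) : ℂ) * Complex.exp (Complex.I * ((β n + θ : ℝ) : ℂ))‖^2)⁻¹
            * ‖A (b n)‖
          ≤ (‖A (b n)‖ * ‖x‖)
            * (16 / ‖1 - Complex.exp (Complex.I * ((β n + θ : ℝ) : ℂ))‖^2)
            * ‖A (b n)‖ := by
            gcongr
        _ = ‖x‖ * (16 * (‖A (b n)‖^2 / ‖1 - Complex.exp (Complex.I * ((β n + θ : ℝ) : ℂ))‖^2)) := by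
            rw [pow_two]; ring)
  rw [show ((∑' n, (((‖1 - Complex.exp (Complex.I * ((β n + θ : ℝ) : ℂ))‖^2 : ℝ)) : ℂ)⁻¹
      • ((innerSL ℂ (A (b n))).smulRight (A (b n)))) x)
      = ∑' n, ((inner ℂ (A (b n)) x : ℂ)
        * (((‖1 - Complex.exp (Complex.I * ((β n + θ : ℝ) : ℂ))‖^2 : ℝ)) : ℂ)⁻¹) • A (b n)
    from hGx2.tsum_eq.symm]
  refine Tendsto.congr' ?_ hDC
  filter_upwards [self_mem_nhdsWithin] with ε hε
  have hε' : (0:ℝ) < ε := hε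
  have hc₁norm : ‖Complex.exp (Complex.I * ((θ : ℂ) + Complex.I * ε))‖ < 1 := by
    rw [Complex.norm_exp]
    have hre : (Complex.I * ((θ : ℂ) + Complex.I * ε)).re = -ε := by
      simp [Complex.mul_re, Complex.add_re, Complex.add_im, Complex.mul_im]
    rw [hre]
    exact Real.exp_lt_one_iff.mpr (by linarith)
  have hc₂norm : ‖Complex.exp (-(Complex.I * ((θ : ℂ) - Complex.I * ε)))‖ < 1 := by
    rw [Complex.norm_exp]
    have hre : (-(Complex.I * ((θ : ℂ) - Complex.I * ε))).re = -ε := by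
      simp [Complex.mul_re, Complex.sub_re, Complex.sub_im, Complex.mul_im]
    rw [hre]
    exact Real.exp_lt_one_iff.mpr (by linarith)
  have hz : ∀ n, Complex.exp (Complex.I * ((θ : ℂ) + Complex.I * ε)) * μc n
      = ((Real.exp (-ε) : ℝ) : ℂ) * Complex.exp (Complex.I * ((β n + θ : ℝ) : ℂ)) := by
    intro n
    rw [hβ n, ← Complex.exp_add, Complex.ofReal_exp, ← Complex.exp_add]
    congr 1
    push_cast
    linear_combination (ε : ℂ) * Complex.I_sq
  have hz2 : ∀ n, Complex.exp (-(Complex.I * ((θ : ℂ) - Complex.I * ε))) * (μc n)⁻¹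
      = starRingEnd ℂ (((Real.exp (-ε) : ℝ) : ℂ)
          * Complex.exp (Complex.I * ((β n + θ : ℝ) : ℂ))) := by
    intro n
    rw [hβ n, ← Complex.exp_neg, ← Complex.exp_add, map_mul, Complex.conj_ofReal,
      ← Complex.exp_conj, map_mul, Complex.conj_I, Complex.conj_ofReal,
      Complex.ofReal_exp, ← Complex.exp_add]
    congr 1
    push_cast
    linear_combination (ε : ℂ) * Complex.I_sq
  have hcs := composite_hasSum b U A hUnorm hAUnorm μc hμ hUb hadj _ _ hc₁norm hc₂norm x
  have hcs2 := hcs.congr_fun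
    (g := fun n => ((inner ℂ (A (b n)) x : ℂ)
      * (((‖1 - ((Real.exp (-ε) : ℝ) : ℂ) * Complex.exp (Complex.I * ((β n + θ : ℝ) : ℂ))‖^2 : ℝ)) : ℂ)⁻¹) • A (b n))
    (fun n => by rw [hz n, hz2 n, conj_inv_pair])
  exact hcs2.tsum_eq.symm ▸ rfl

end Helpers

/-- Let `H₀` have pure point spectrum (eigenbasis `φ_n`, `H₀φ_n = α_n φ_n`),
`U = e^{iTH₀/ℏ}` (so `Uφ_n = e^{iTα_n/ℏ}φ_n`), and let `A` be strongly `H₀`-finite,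
`Σ_n ‖Aφ_n‖ < ∞`.  Then for a.e. `θ ∈ [0, 2π)`:
the trace sum `Σ_n ‖Aφ_n‖²/|1 − e^{i(Tα_n/ℏ+θ)}|²` is finite; the trace norms
`tr G_ε(θ) = Σ_n ‖Aφ_n‖²/|1 − e^{−ε}e^{iTα_n/ℏ}e^{iθ}|²` are uniformly bounded as
`ε → 0⁺`; and the strong limit `G(θ) = s-lim_{ε→0⁺} G_ε(θ)` of
`G_ε(θ) = A(1 − U*e^{−i(θ−iε)})^{−1}(1 − Ue^{i(θ+iε)})^{−1}A*` exists
(`A` is `U`-finite). -/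
theorem stmt18 {H K : Type*}
    [NormedAddCommGroup H] [InnerProductSpace ℂ H] [CompleteSpace H]
    [NormedAddCommGroup K] [InnerProductSpace ℂ K] [CompleteSpace K]
    (b : HilbertBasis ℕ ℂ H) (α : ℕ → ℝ) (T ℏ : ℝ) (hT : 0 < T) (hℏ : 0 < ℏ)
    (U : H →L[ℂ] H) (hU₁ : adjoint U ∘L U = 1) (hU₂ : U ∘L adjoint U = 1)
    (hUb : ∀ n, U (b n) = Complex.exp (Complex.I * (T * α n / ℏ)) • b n)
    (A : H →L[ℂ] K) (hfin : Summable (fun n => ‖A (b n)‖)) :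
    ∀ᵐ (θ : ℝ) ∂(volume.restrict (Set.Ico (0 : ℝ) (2 * Real.pi))),
      Summable (fun n =>
        ‖A (b n)‖ ^ 2 / ‖1 - Complex.exp (Complex.I * ((T * α n / ℏ + θ : ℝ) : ℂ))‖ ^ 2) ∧
      (∃ Cb : ℝ, ∀ ε : ℝ, 0 < ε →
        (∑' n, ‖A (b n)‖ ^ 2 /
            ‖1 - Real.exp (-ε) * Complex.exp (Complex.I * ((T * α n / ℏ + θ : ℝ) : ℂ))‖ ^ 2) ≤ Cb) ∧
      (∃ G : K →L[ℂ] K, ∀ x : K,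
        Tendsto (fun ε : ℝ =>
            (A ∘L Ring.inverse (1 - Complex.exp (-(Complex.I * ((θ : ℂ) - Complex.I * ε))) • adjoint U)
              ∘L Ring.inverse (1 - Complex.exp (Complex.I * ((θ : ℂ) + Complex.I * ε)) • U)
              ∘L adjoint A) x)
          (nhdsWithin 0 (Set.Ioi 0)) (nhds (G x))) := by
  have hπ := Real.pi_pos
  have hUnorm : ‖U‖ ≤ 1 :=
    ContinuousLinearMap.opNorm_le_bound _ zero_le_one fun x => by
      rw [norm_isometry U hU₁ x, one_mul]
  have hAUnorm : ‖adjoint U‖ ≤ 1 :=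
    ContinuousLinearMap.opNorm_le_bound _ zero_le_one fun x => by
      rw [norm_isometry (adjoint U)
        (by rw [ContinuousLinearMap.adjoint_adjoint]; exact hU₂) x, one_mul]
  have hβ : ∀ n, Complex.exp (Complex.I * (T * α n / ℏ))
      = Complex.exp (Complex.I * ((T * α n / ℏ : ℝ) : ℂ)) := by
    intro n; congr 1; push_cast; ring
  have hμ : ∀ n, ‖Complex.exp (Complex.I * (T * α n / ℏ))‖ = 1 := by
    intro n
    rw [hβ n, Complex.norm_exp]
    have : (Complex.I * ((T * α n / ℏ : ℝ) : ℂ)).re = 0 := by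
      simp [Complex.mul_re]
    rw [this, Real.exp_zero]
  have hadj : ∀ n, adjoint U (b n) = (Complex.exp (Complex.I * (T * α n / ℏ)))⁻¹ • b n := by
    intro n
    have h1 : adjoint U (U (b n)) = b n := by
      have := congrArg (fun (W : H →L[ℂ] H) => W (b n)) hU₁
      simpa using this
    rw [hUb n, ContinuousLinearMap.map_smul] at h1
    rw [eq_comm, inv_smul_eq_iff₀ (Complex.exp_ne_zero _)]
    exact h1.symm
  -- a.e. events
  have hE1 : ∀ᵐ θ : ℝ ∂volume, ∀ n,
      1 - Complex.exp (Complex.I * ((T * α n / ℏ + θ : ℝ) : ℂ)) ≠ 0 := by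
    rw [MeasureTheory.ae_all_iff]
    intro n
    rw [ae_iff]
    refine measure_mono_null ?_
      ((Set.countable_range (fun k : ℤ => (k : ℝ) * (2*π) - T * α n / ℏ)).measure_zero _)
    · intro θ hθ
      simp only [Set.mem_setOf_eq, not_not] at hθ
      have h1 : Complex.exp (Complex.I * ((T * α n / ℏ + θ : ℝ) : ℂ)) = 1 := by
        linear_combination -hθ
      rw [mul_comm] at h1
      have h2 : Real.cos (T * α n / ℏ + θ) = 1 := by
        have := congrArg Complex.re h1
        rwa [Complex.exp_ofReal_mul_I_re, Complex.one_re] at this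
      rw [Real.cos_eq_one_iff] at h2
      obtain ⟨k, hk⟩ := h2
      exact ⟨k, by linarith⟩
  have hE2 := ae_summable_g (fun n => ‖A (b n)‖) (fun n => norm_nonneg _) hfin
    (fun n => T * α n / ℏ)
  filter_upwards [ae_restrict_of_ae hE1, hE2] with θ hne hsumg
  have hDeq : ∀ n, ‖1 - Complex.exp (Complex.I * ((T * α n / ℏ + θ : ℝ) : ℂ))‖^2
      = 2 - 2*Real.cos (T * α n / ℏ + θ) := by
    intro n
    have h := normsq_one_sub 1 (T * α n / ℏ + θ)
    rw [Complex.ofReal_one, one_mul] at h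
    rw [h]
    nlinarith [Real.sin_sq_add_cos_sq (T * α n / ℏ + θ)]
  have hdpos : ∀ n, 0 < ‖1 - Complex.exp (Complex.I * ((T * α n / ℏ + θ : ℝ) : ℂ))‖^2 :=
    fun n => d_pos_iff _ (hne n)
  -- claim 1
  have hclaim1 : Summable (fun n =>
      ‖A (b n)‖ ^ 2 / ‖1 - Complex.exp (Complex.I * ((T * α n / ℏ + θ : ℝ) : ℂ))‖ ^ 2) := by
    have hev : ∀ᶠ n in atTop,
        ‖A (b n)‖^2 / ((2 - 2*Real.cos (T * α n / ℏ + θ)) + ‖A (b n)‖^2) < 1/2 :=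
      hsumg.tendsto_atTop_zero.eventually_lt_const (by norm_num)
    apply Summable.of_norm_bounded_eventually_nat
      (g := fun n => 2 * (‖A (b n)‖^2 / ((2 - 2*Real.cos (T * α n / ℏ + θ)) + ‖A (b n)‖^2)))
      (hsumg.mul_left 2)
    filter_upwards [hev] with n hn
    have hd := hdpos n
    rw [hDeq n] at hd ⊢
    rw [Real.norm_of_nonneg (by positivity)]
    have hDa : 0 < (2 - 2*Real.cos (T * α n / ℏ + θ)) + ‖A (b n)‖^2 := by positivity
    have hkey : ‖A (b n)‖^2 ≤ 2 - 2*Real.cos (T * α n / ℏ + θ) := by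
      have := (div_lt_iff₀ hDa).mp hn
      nlinarith
    rw [← mul_div_assoc, div_le_div_iff₀ hd hDa]
    nlinarith [hkey, sq_nonneg (‖A (b n)‖)]
  refine ⟨hclaim1, ⟨16 * ∑' n, ‖A (b n)‖ ^ 2
      / ‖1 - Complex.exp (Complex.I * ((T * α n / ℏ + θ : ℝ) : ℂ))‖ ^ 2, fun ε hε => ?_⟩, ?_⟩
  · have hr0 : (0:ℝ) < Real.exp (-ε) := Real.exp_pos _
    have hr1 : Real.exp (-ε) ≤ 1 := Real.exp_le_one_iff.mpr (by linarith)
    have hptwise : ∀ n, ‖A (b n)‖ ^ 2 /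
        ‖1 - (Real.exp (-ε) : ℂ) * Complex.exp (Complex.I * ((T * α n / ℏ + θ : ℝ) : ℂ))‖ ^ 2
        ≤ 16 * (‖A (b n)‖ ^ 2
          / ‖1 - Complex.exp (Complex.I * ((T * α n / ℏ + θ : ℝ) : ℂ))‖ ^ 2) := by
      intro n
      have h16 := sixteen' (Real.exp (-ε)) (T * α n / ℏ + θ) hr0 hr1
      have hd := hdpos n
      have hN : (0:ℝ) < ‖1 - (Real.exp (-ε) : ℂ)
          * Complex.exp (Complex.I * ((T * α n / ℏ + θ : ℝ) : ℂ))‖ ^ 2 := by nlinarith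
      have h1 : ‖A (b n)‖ ^ 2 /
          ‖1 - (Real.exp (-ε) : ℂ) * Complex.exp (Complex.I * ((T * α n / ℏ + θ : ℝ) : ℂ))‖ ^ 2
          ≤ ‖A (b n)‖ ^ 2 /
          (‖1 - Complex.exp (Complex.I * ((T * α n / ℏ + θ : ℝ) : ℂ))‖ ^ 2 / 16) :=
        div_le_div_of_nonneg_left (by positivity) (by positivity) (by linarith)
      have h2 : ‖A (b n)‖ ^ 2 /
          (‖1 - Complex.exp (Complex.I * ((T * α n / ℏ + θ : ℝ) : ℂ))‖ ^ 2 / 16)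
          = 16 * (‖A (b n)‖ ^ 2
            / ‖1 - Complex.exp (Complex.I * ((T * α n / ℏ + θ : ℝ) : ℂ))‖ ^ 2) := by
        rw [div_div_eq_mul_div]; ring
      linarith
    have hsummableL : Summable (fun n => ‖A (b n)‖ ^ 2 /
        ‖1 - (Real.exp (-ε) : ℂ) * Complex.exp (Complex.I * ((T * α n / ℏ + θ : ℝ) : ℂ))‖ ^ 2) :=
      Summable.of_nonneg_of_le (fun n => by positivity) hptwise (hclaim1.mul_left 16)
    calc (∑' n, ‖A (b n)‖ ^ 2 /
          ‖1 - (Real.exp (-ε) : ℂ) * Complex.exp (Complex.I * ((T * α n / ℏ + θ : ℝ) : ℂ))‖ ^ 2)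
        ≤ ∑' n, 16 * (‖A (b n)‖ ^ 2
          / ‖1 - Complex.exp (Complex.I * ((T * α n / ℏ + θ : ℝ) : ℂ))‖ ^ 2) :=
          Summable.tsum_le_tsum hptwise hsummableL (hclaim1.mul_left 16)
      _ = 16 * ∑' n, ‖A (b n)‖ ^ 2
          / ‖1 - Complex.exp (Complex.I * ((T * α n / ℏ + θ : ℝ) : ℂ))‖ ^ 2 := tsum_mul_left
  · exact limit_part b U A hUnorm hAUnorm
      (fun n => Complex.exp (Complex.I * (T * α n / ℏ))) hμ hUb hadj θ
      (fun n => T * α n / ℏ) hβ hdpos hclaim1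
end

section
/- Let c_n ≥ 0 with Σ_n √c_n < ∞ and let β_n be arbitrary real numbers. Then for Lebesgue-almost every θ ∈ [0, 2π), Σ_n c_n / |1 − e^{i(β_n + θ)}|² < ∞. -/
open Real Complex MeasureTheory

/-- `|1 - e^{iφ}|² = 2 - 2 cos φ`. -/
lemma stmt19_norm_sq (φ : ℝ) :
    ‖1 - Complex.exp (Complex.I * (φ : ℂ))‖ ^ 2 = 2 - 2 * Real.cos φ := by
  rw [mul_comm, Complex.exp_mul_I]
  have : (1 : ℂ) - (Complex.cos φ + Complex.sin φ * Complex.I)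
      = Complex.ofReal (1 - Real.cos φ) + Complex.ofReal (- Real.sin φ) * Complex.I := by
    push_cast [Complex.ofReal_cos, Complex.ofReal_sin]; ring
  rw [this, Complex.sq_norm, Complex.normSq_add_mul_I]
  nlinarith [Real.sin_sq_add_cos_sq φ]

/-- Key pointwise bound: `min (c/|1-e^{iφ}|², 1) ≤ 2B/(B + r²)` where `B = cπ²/4` and
`r` is the signed distance from `φ` to the nearest multiple of `2π`. -/
lemma stmt19_pointwise (c : ℝ) (hc : 0 ≤ c) (φ : ℝ) :
    min (c / ‖1 - Complex.exp (Complex.I * (φ : ℂ))‖ ^ 2) 1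
      ≤ 2 * (c * π ^ 2 / 4) /
        (c * π ^ 2 / 4 + (φ - 2 * π * (round (φ / (2 * π)) : ℤ)) ^ 2) := by
  have hπ : (0:ℝ) < π := Real.pi_pos
  set B : ℝ := c * π ^ 2 / 4 with hBdef
  set r : ℝ := φ - 2 * π * (round (φ / (2 * π)) : ℤ) with hrdef
  rcases hc.eq_or_lt with h | h
  · simp [← h, hBdef]
  have hB : 0 < B := by positivity
  have hrπ : |r| ≤ π := by
    have h1 : |φ / (2 * π) - round (φ / (2 * π))| ≤ 1 / 2 := abs_sub_round _
    have h2 : r = (2 * π) * (φ / (2 * π) - round (φ / (2 * π))) := by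
      field_simp [hrdef]
      exact hrdef
    rw [h2, abs_mul, abs_of_pos (by positivity : (0:ℝ) < 2 * π)]
    nlinarith
  have hD : (4 / π ^ 2) * r ^ 2 ≤ ‖1 - Complex.exp (Complex.I * (φ : ℂ))‖ ^ 2 := by
    rw [stmt19_norm_sq]
    have hφ : φ = r + (round (φ / (2 * π)) : ℤ) * (2 * π) := by rw [hrdef]; ring
    rw [hφ, Real.cos_add_int_mul_two_pi]
    have h5 := Real.cos_le_one_sub_mul_cos_sq hrπ
    have h4 : 4 / π ^ 2 * r ^ 2 = 2 * (2 / π ^ 2 * r ^ 2) := by ring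
    linarith
  by_cases hr : r ^ 2 ≤ B
  · refine (min_le_right _ _).trans ?_
    rw [le_div_iff₀ (by positivity)]
    nlinarith
  · push_neg at hr
    have hr0 : 0 < r ^ 2 := lt_trans hB hr
    have hDpos : 0 < ‖1 - Complex.exp (Complex.I * (φ : ℂ))‖ ^ 2 :=
      lt_of_lt_of_le (by positivity) hD
    refine (min_le_left _ _).trans ?_
    have h1 : c / ‖1 - Complex.exp (Complex.I * (φ : ℂ))‖ ^ 2 ≤ c / ((4 / π ^ 2) * r ^ 2) :=
      div_le_div_of_nonneg_left hc (by positivity) hD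
    refine h1.trans ?_
    have h2 : c / ((4 / π ^ 2) * r ^ 2) = B / r ^ 2 := by
      rw [hBdef]; field_simp
    rw [h2, div_le_div_iff₀ hr0 (by positivity)]
    nlinarith

/-- The integral of the bump over the whole line. -/
lemma stmt19_bump_integral (b : ℝ) (hb : 0 < b) :
    ∫ x : ℝ, 2 * b / (b + x ^ 2) = 2 * π * Real.sqrt b := by
  have hsb : (0:ℝ) < Real.sqrt b := Real.sqrt_pos.2 hb
  have h1 : ∀ x : ℝ, 2 * b / (b + x ^ 2) = 2 * (1 + (x / Real.sqrt b) ^ 2)⁻¹ := by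
    intro x
    rw [div_pow, Real.sq_sqrt hb.le]
    field_simp
  simp_rw [h1]
  rw [MeasureTheory.integral_const_mul,
    MeasureTheory.Measure.integral_comp_div (fun x : ℝ => (1 + x ^ 2)⁻¹) (Real.sqrt b),
    integral_univ_inv_one_add_sq]
  rw [abs_of_pos hsb, smul_eq_mul]; ring

lemma stmt19_bump_integrable (b : ℝ) (hb : 0 < b) :
    Integrable (fun x : ℝ => 2 * b / (b + x ^ 2)) := by
  have hsb : (0:ℝ) < Real.sqrt b := Real.sqrt_pos.2 hb
  have h1 : (fun x : ℝ => 2 * b / (b + x ^ 2))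
      = fun x => 2 * (1 + (x / Real.sqrt b) ^ 2)⁻¹ := by
    funext x; rw [div_pow, Real.sq_sqrt hb.le]; field_simp
  rw [h1]
  exact (integrable_inv_one_add_sq.comp_div hsb.ne').const_mul 2

/-- Translated bump lintegral bound. -/
lemma stmt19_bump_lintegral (b : ℝ) (hb : 0 ≤ b) (s : ℝ) :
    ∫⁻ x : ℝ, ENNReal.ofReal (2 * b / (b + (x + s) ^ 2))
      ≤ ENNReal.ofReal (2 * π * Real.sqrt b) := by
  rcases hb.eq_or_lt with h | h
  · simp [← h]
  · have heq := lintegral_add_right_eq_self (μ := volume)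
      (fun x : ℝ => ENNReal.ofReal (2 * b / (b + x ^ 2))) s
    rw [heq, ← ofReal_integral_eq_lintegral_ofReal (stmt19_bump_integrable b h)
      (Filter.Eventually.of_forall (fun x => by positivity)),
      stmt19_bump_integral b h]

/-- If `c_n ≥ 0` with `Σ_n √c_n < ∞` and `β_n` are arbitrary reals, then for
Lebesgue-almost every `θ ∈ [0, 2π)`, `Σ_n c_n / |1 − e^{i(β_n + θ)}|² < ∞`. -/
theorem stmt19 (c : ℕ → ℝ) (hc : ∀ n, 0 ≤ c n)
    (hsum : Summable (fun n => Real.sqrt (c n))) (β : ℕ → ℝ) :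
    ∀ᵐ (θ : ℝ) ∂(volume.restrict (Set.Ico (0 : ℝ) (2 * Real.pi))),
      Summable (fun n =>
        c n / ‖1 - Complex.exp (Complex.I * ((β n + θ : ℝ) : ℂ))‖ ^ 2) := by
  have hπ : (0:ℝ) < π := Real.pi_pos
  set f : ℕ → ℝ → ℝ := fun n θ =>
    min (c n / ‖1 - Complex.exp (Complex.I * ((β n + θ : ℝ) : ℂ))‖ ^ 2) 1 with hf
  have hf_nonneg : ∀ n θ, 0 ≤ f n θ := fun n θ =>
    le_min (div_nonneg (hc n) (pow_nonneg (norm_nonneg _) 2)) zero_le_one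
  set g : ℕ → ℝ → ENNReal := fun n θ => ENNReal.ofReal (f n θ) with hg
  have hcont : ∀ n, Continuous fun θ : ℝ =>
      ‖1 - Complex.exp (Complex.I * ((β n + θ : ℝ) : ℂ))‖ ^ 2 := by
    intro n; fun_prop
  have hmeas : ∀ n, Measurable (g n) := by
    intro n
    exact (((measurable_const.div (hcont n).measurable).min measurable_const)).ennreal_ofReal
  -- per-n integral bound
  have hint : ∀ n, ∫⁻ θ in Set.Ico (0:ℝ) (2 * π), g n θ
      ≤ ENNReal.ofReal (2 * π ^ 2 * Real.sqrt (c n)) := by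
    intro n
    set B : ℝ := c n * π ^ 2 / 4 with hBdef
    have hB0 : 0 ≤ B := by rw [hBdef]; have h := hc n; positivity
    have hbm : ∀ s : ℝ, Measurable fun θ : ℝ =>
        ENNReal.ofReal (2 * B / (B + (θ + s) ^ 2)) := fun s =>
      (measurable_const.div
        ((by fun_prop : Continuous fun θ : ℝ => B + (θ + s) ^ 2).measurable)).ennreal_ofReal
    set m : ℤ := ⌊β n / (2 * π) + 1 / 2⌋ with hm
    have step1 : ∫⁻ θ in Set.Ico (0:ℝ) (2 * π), g n θ
        ≤ ∫⁻ θ in Set.Ico (0:ℝ) (2 * π),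
          (ENNReal.ofReal (2 * B / (B + (θ + (β n - 2 * π * (m : ℝ))) ^ 2))
            + ENNReal.ofReal (2 * B / (B + (θ + (β n - 2 * π * ((m : ℝ) + 1))) ^ 2))) := by
      refine setLIntegral_mono ((hbm _).add (hbm _)) ?_
      intro θ hθ
      have hkb := stmt19_pointwise (c n) (hc n) (β n + θ)
      set k : ℤ := round ((β n + θ) / (2 * π)) with hkdef
      have hsplit : (β n + θ) / (2 * π) = β n / (2 * π) + θ / (2 * π) := by ring
      have hθ0 : 0 ≤ θ / (2 * π) := div_nonneg hθ.1 (by positivity)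
      have hθd : β n / (2 * π) ≤ (β n + θ) / (2 * π) := by rw [hsplit]; linarith
      have hθd2 : (β n + θ) / (2 * π) < β n / (2 * π) + 1 := by
        have h3 : θ / (2 * π) < 1 := (div_lt_one (by positivity)).2 hθ.2
        rw [hsplit]; linarith
      have hk1 : m ≤ k := by
        rw [hkdef, round_eq]
        exact Int.le_floor.2 (le_trans (Int.floor_le _) (by linarith))
      have hk2 : k ≤ m + 1 := by
        rw [hkdef, round_eq]
        have h4 : (β n + θ) / (2 * π) + 1 / 2 < ((m : ℝ) + 1) + 1 := by
          have := Int.lt_floor_add_one (β n / (2 * π) + 1 / 2)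
          rw [← hm] at this
          linarith
        have h5 : ⌊(β n + θ) / (2 * π) + 1 / 2⌋ < m + 1 + 1 := by
          apply Int.floor_lt.2
          push_cast
          linarith
        omega
      have hkm : k = m ∨ k = m + 1 := by omega
      have hgle : g n θ ≤ ENNReal.ofReal
          (2 * B / (B + (β n + θ - 2 * π * (k : ℝ)) ^ 2)) := by
        rw [hg]
        exact ENNReal.ofReal_le_ofReal hkb
      rcases hkm with h | h
      · refine le_trans hgle (le_trans (le_of_eq ?_) le_self_add)
        rw [h]; congr 1; ring
      · refine le_trans hgle (le_trans (le_of_eq ?_) le_add_self)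
        rw [h]; congr 1; push_cast; ring
    have step2 : ∫⁻ θ in Set.Ico (0:ℝ) (2 * π),
          (ENNReal.ofReal (2 * B / (B + (θ + (β n - 2 * π * (m : ℝ))) ^ 2))
            + ENNReal.ofReal (2 * B / (B + (θ + (β n - 2 * π * ((m : ℝ) + 1))) ^ 2)))
        ≤ ENNReal.ofReal (2 * π * Real.sqrt B) + ENNReal.ofReal (2 * π * Real.sqrt B) := by
      refine le_trans (setLIntegral_le_lintegral _ _) ?_
      rw [lintegral_add_left (hbm _)]
      exact add_le_add (stmt19_bump_lintegral B hB0 _) (stmt19_bump_lintegral B hB0 _)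
    refine le_trans (le_trans step1 step2) ?_
    have hsqB : Real.sqrt B = Real.sqrt (c n) * (π / 2) := by
      rw [hBdef, show c n * π ^ 2 / 4 = c n * (π / 2) ^ 2 by ring,
        Real.sqrt_mul (hc n), Real.sqrt_sq (by positivity)]
    rw [← ENNReal.ofReal_add (by positivity) (by positivity)]
    apply ENNReal.ofReal_le_ofReal
    rw [hsqB]; ring_nf; linarith [Real.sqrt_nonneg (c n), sq_nonneg π]
  -- sum the bounds
  have hsum2 : Summable (fun n => 2 * π ^ 2 * Real.sqrt (c n)) := hsum.mul_left _
  have htsum : ∫⁻ θ in Set.Ico (0:ℝ) (2 * π), ∑' n, g n θ ≠ ⊤ := by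
    rw [lintegral_tsum (fun n => (hmeas n).aemeasurable)]
    refine ne_top_of_le_ne_top ?_ (ENNReal.tsum_le_tsum hint)
    rw [← ENNReal.ofReal_tsum_of_nonneg
      (fun n => by positivity) hsum2]
    exact ENNReal.ofReal_ne_top
  have hmeas_tsum : Measurable fun θ => ∑' n, g n θ := Measurable.ennreal_tsum hmeas
  have hae := ae_lt_top hmeas_tsum htsum
  filter_upwards [hae] with θ hθ
  have hsf : Summable (fun n => f n θ) := by
    have h1 := ENNReal.summable_toReal hθ.ne
    refine h1.congr fun n => ?_
    rw [hg]
    exact ENNReal.toReal_ofReal (hf_nonneg n θ)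
  have h0 : Filter.Tendsto (fun n => f n θ) Filter.atTop (nhds 0) :=
    hsf.tendsto_atTop_zero
  have hev : ∀ᶠ n in Filter.atTop, f n θ < 1 := h0.eventually_lt_const one_pos
  rw [Filter.eventually_atTop] at hev
  obtain ⟨N, hN⟩ := hev
  rw [← summable_nat_add_iff N]
  refine ((summable_nat_add_iff N).2 hsf).congr fun n => ?_
  have hlt := hN (n + N) (by omega)
  rw [hf] at hlt ⊢
  simp only at hlt ⊢
  rcases min_lt_iff.1 hlt with h | h
  · exact min_eq_left h.le
  · exact absurd h (lt_irrefl 1)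
end
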